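/- arXiv:2107.03559 — 8 statements merged into one kernel-verified Lean document; each statement's English description precedes it below -/
import Mathlib

section
/- Every Radon measure μ on |X| is a countable weighted sum of Dirac measures: there exist points x_0, x_1, x_2, … of X and real numbers a_0, a_1, a_2, … ≥ 0 such that μ = Σ_{i≥0} a_i δ_{x_i} (as Borel measures on |X|). -/
open AlgebraicGeometry CategoryTheory MeasureTheory Filter Topology

noncomputable section

/-- The constructible topology on (the underlying Zariski topological space of) `α`:
the topology generated by the Zariski-open and the Zariski-closed subsets. -/
def consTop (α : Type*) [TopologicalSpace α] : TopologicalSpace α :=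
  TopologicalSpace.generateFrom {s | IsOpen s ∨ IsClosed s}

/-- `|X|`: the underlying set of the scheme `X` equipped with the constructible topology. -/
def Cons (X : AlgebraicGeometry.Scheme) : Type _ := X

instance (X : Scheme) : TopologicalSpace (Cons X) := consTop X
instance (X : Scheme) : MeasurableSpace (Cons X) := borel (Cons X)
instance (X : Scheme) : BorelSpace (Cons X) := ⟨rfl⟩

/-- The identity map, from the Zariski space of `X` to the constructible space `|X|`. -/
def toCons {X : Scheme} (x : X) : Cons X := x

-- helpers
def toZar {X : Scheme} (x : Cons X) : X := x

section Aux

variable {X : Scheme}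

lemma cons_isOpen_of_isOpen {s : Set X} (h : IsOpen s) :
    IsOpen (show Set (Cons X) from s) :=
  TopologicalSpace.isOpen_generateFrom_of_mem (Or.inl h)

lemma cons_isOpen_of_isClosed {s : Set X} (h : IsClosed s) :
    IsOpen (show Set (Cons X) from s) :=
  TopologicalSpace.isOpen_generateFrom_of_mem (Or.inr h)

lemma cons_isClosed_of_isClosed {s : Set X} (h : IsClosed s) :
    IsClosed (show Set (Cons X) from s) :=
  ⟨cons_isOpen_of_isOpen h.isOpen_compl⟩

instance : T2Space (Cons X) := by
  constructor
  intro x y hxy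
  have h : ¬Inseparable (toZar x) (toZar y) := fun h => hxy h.eq
  rw [inseparable_iff_specializes_and] at h
  have key : ∀ a b : Cons X, toZar b ∉ closure {toZar a} →
      ∃ u v : Set (Cons X), IsOpen u ∧ IsOpen v ∧ a ∈ u ∧ b ∈ v ∧ Disjoint u v := by
    intro a b hab
    refine ⟨show Set (Cons X) from (closure {toZar a} : Set X),
      show Set (Cons X) from (closure {toZar a} : Set X)ᶜ, ?_, ?_, ?_, ?_, ?_⟩
    · exact cons_isOpen_of_isClosed isClosed_closure
    · exact cons_isOpen_of_isOpen (isClosed_closure (s := {toZar a})).isOpen_compl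
    · show toZar a ∈ closure ({toZar a} : Set X)
      exact subset_closure rfl
    · exact hab
    · exact disjoint_compl_right
  rcases not_and_or.mp h with h' | h'
  · rw [specializes_iff_mem_closure] at h'
    exact key x y h'
  · rw [specializes_iff_mem_closure] at h'
    obtain ⟨u, v, hu, hv, ha, hb, hd⟩ := key y x h'
    exact ⟨v, u, hv, hu, hb, ha, hd.symm⟩

example : MeasurableSingletonClass (Cons X) := inferInstance

/-- `X` is a Noetherian topological space. -/
lemma noeth {k : Type} [Field k] (X : Scheme)
    (p : X ⟶ Spec (CommRingCat.of k)) [LocallyOfFiniteType p] [QuasiCompact p] :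
    TopologicalSpace.NoetherianSpace X := by
  have hc : CompactSpace X := QuasiCompact.compactSpace_of_compactSpace p
  haveI hk0 : IsNoetherianRing (CommRingCat.of k) := inferInstanceAs (IsNoetherianRing k)
  have e : (CommRingCat.of k : Type) ≃+* Γ(Spec (CommRingCat.of k), ⊤) :=
    (Scheme.ΓSpecIso (CommRingCat.of k)).symm.commRingCatIsoToRingEquiv
  have hk : IsNoetherianRing Γ(Spec (CommRingCat.of k), ⊤) :=
    isNoetherianRing_of_ringEquiv (CommRingCat.of k) e
  have hln : IsLocallyNoetherian X := by
    constructor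
    intro U
    have h := LocallyOfFiniteType.finiteType_appLE p
      (isAffineOpen_top _) U.2 (by simp)
    letI := (p.appLE ⊤ U.1 (by simp)).hom.toAlgebra
    haveI : Algebra.FiniteType Γ(Spec (CommRingCat.of k), ⊤) Γ(X, U.1) := h
    exact Algebra.FiniteType.isNoetherianRing Γ(Spec (CommRingCat.of k), ⊤) Γ(X, U.1)
  have : IsNoetherian X := ⟨⟩
  infer_instance

end Aux

section Core

open TopologicalSpace Set

variable {X : Scheme}

lemma compact_null [NoetherianSpace X]
    (μ : Measure (Cons X)) [μ.InnerRegular]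
    {K : Set (Cons X)} (hK : IsCompact K) (h0 : ∀ x ∈ K, μ {x} = 0) : μ K = 0 := by
  by_contra hne
  set 𝒮 : Set (Closeds X) := {C | μ (K ∩ (C : Set X)) ≠ 0} with h𝒮
  have hne' : 𝒮.Nonempty := by
    refine ⟨⊤, ?_⟩
    show μ (K ∩ ((⊤ : Closeds X) : Set X)) ≠ 0
    have e : K ∩ ((⊤ : Closeds X) : Set X) = K := Set.inter_univ K
    rw [e]; exact hne
  obtain ⟨C, hC, hmin⟩ := (wellFounded_lt (α := Closeds X)).has_min 𝒮 hne'
  -- `C` is irreducible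
  obtain ⟨S, hSirr, hSsup⟩ := NoetherianSpace.exists_finset_irreducible C
  have hCirr : IsIrreducible (C : Set X) := by
    have : ∃ t ∈ S, μ (K ∩ (t : Set X)) ≠ 0 := by
      by_contra hcon
      push_neg at hcon
      apply hC
      have hsub : K ∩ (C : Set X) ⊆ ⋃ t ∈ S, (K ∩ (t : Set X)) := by
        intro z hz
        have hz2 : (toZar z) ∈ (C : Set X) := hz.2
        rw [hSsup] at hz2
        have : ∃ t ∈ S, (toZar z) ∈ (t : Set X) := by
          have h3 := hz2
          rw [Closeds.coe_finset_sup, Finset.sup_set_eq_biUnion] at h3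
          simpa using h3
        obtain ⟨t, htS, htz⟩ := this
        exact Set.mem_biUnion htS ⟨hz.1, htz⟩
      refine le_antisymm ?_ zero_le
      calc μ (K ∩ (C : Set X)) ≤ ∑ t ∈ S, μ (K ∩ (t : Set X)) :=
            (measure_mono hsub).trans (measure_biUnion_finset_le S _)
        _ = 0 := Finset.sum_eq_zero fun t ht => hcon t ht
    obtain ⟨t, htS, htμ⟩ := this
    have htC : t ≤ C := by rw [hSsup]; exact Finset.le_sup (f := id) htS
    have : t = C := by
      rcases htC.lt_or_eq with hlt | heq
      · exact absurd hlt (hmin t htμ)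
      · exact heq
    rw [← this]
    exact hSirr ⟨t, htS⟩
  obtain ⟨ξ, hξ⟩ := QuasiSober.sober hCirr C.isClosed
  have hξC : (ξ : X) ∈ (C : Set X) := hξ.mem
  -- the measure of `K ∩ C` minus the generic point is positive
  set A : Set (Cons X) := (K ∩ (C : Set X)) \ {toCons ξ} with hA
  have hAμ : μ A ≠ 0 := by
    have h1 : μ (({toCons ξ} : Set (Cons X)) ∩ K) = 0 := by
      by_cases hxK : toCons ξ ∈ K
      · exact le_antisymm ((measure_mono inter_subset_left).trans_eq (h0 _ hxK)) zero_le
      · rw [Set.singleton_inter_eq_empty.mpr hxK, measure_empty]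
    intro hA0
    apply hC
    have hsub : K ∩ (C : Set X) ⊆ A ∪ (({toCons ξ} : Set (Cons X)) ∩ K) := by
      intro z hz
      by_cases hzξ : z = toCons ξ
      · exact Or.inr ⟨hzξ, hz.1⟩
      · exact Or.inl ⟨hz, hzξ⟩
    refine le_antisymm ?_ zero_le
    calc μ (K ∩ (C : Set X)) ≤ μ A + μ (({toCons ξ} : Set (Cons X)) ∩ K) :=
          (measure_mono hsub).trans (measure_union_le _ _)
      _ = 0 := by rw [hA0, h1, add_zero]
  -- measurability of `A`
  have hCm : MeasurableSet (show Set (Cons X) from (C : Set X)) :=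
    (cons_isClosed_of_isClosed C.isClosed).measurableSet
  have hAm : MeasurableSet A :=
    ((hK.isClosed.measurableSet.inter hCm)).diff (measurableSet_singleton _)
  -- inner regularity: compact `K' ⊆ A` of positive measure
  obtain ⟨K', hK'A, hK'c, hK'pos⟩ :=
    Measure.InnerRegular.innerRegular (μ := μ) hAm 0 (pos_iff_ne_zero.mpr hAμ)
  -- cover `K'` by the Zariski closures of its points
  have hcover : K' ⊆ ⋃ y ∈ K', (show Set (Cons X) from (closure {toZar y} : Set X)) := by
    intro y hy
    exact Set.mem_biUnion hy
      (show toZar y ∈ closure ({toZar y} : Set X) from subset_closure rfl)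
  obtain ⟨b, hbK', hbfin, hbcover⟩ := hK'c.elim_finite_subcover_image
    (fun y _ => cons_isOpen_of_isClosed isClosed_closure) hcover
  set E : Closeds X := ⟨⋃ y ∈ b, (closure {toZar y} : Set X),
    hbfin.isClosed_biUnion fun _ _ => isClosed_closure⟩ with hE
  have hEC : (E : Set X) ⊆ (C : Set X) := by
    refine Set.iUnion₂_subset fun y hy => ?_
    have hyC : (toZar y) ∈ (C : Set X) := ((hK'A.trans Set.diff_subset) (hbK' hy)).2
    exact closure_minimal (Set.singleton_subset_iff.mpr hyC) C.isClosed
  have hξE : (ξ : X) ∉ (E : Set X) := by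
    intro hmem
    obtain ⟨y, hy, hyξ⟩ := Set.mem_iUnion₂.mp hmem
    have h1 : closure ({toZar y} : Set X) = (C : Set X) := by
      refine subset_antisymm ?_ ?_
      · have hyC : (toZar y) ∈ (C : Set X) := ((hK'A.trans Set.diff_subset) (hbK' hy)).2
        exact closure_minimal (Set.singleton_subset_iff.mpr hyC) C.isClosed
      · rw [← hξ]
        exact closure_minimal (Set.singleton_subset_iff.mpr hyξ) isClosed_closure
    have h2 : toZar y = ξ := IsGenericPoint.eq h1 hξ
    exact (hK'A (hbK' hy)).2 h2
  have hEmem : E ∈ 𝒮 := by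
    have hK'sub : K' ⊆ K ∩ (E : Set X) :=
      Set.subset_inter ((hK'A.trans Set.diff_subset).trans inter_subset_left) hbcover
    intro h
    exact absurd (le_antisymm ((measure_mono hK'sub).trans_eq h) zero_le) hK'pos.ne'
  have hEltC : E < C := lt_of_le_of_ne (by exact hEC) (fun h => hξE (h ▸ hξC))
  exact hmin E hEmem hEltC

end Core

/-- every Radon measure (finite Borel measure, inner regular with respect to
compact subsets) on `|X|`, `X` a variety over an algebraically closed field `k`, is a countable
weighted sum `Σ_{i≥0} a_i δ_{x_i}` of Dirac measures with nonnegative weights. -/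
theorem stmt0
    -- `X` is a variety over the algebraically closed field `k`:
    (k : Type) [Field k] [IsAlgClosed k] (X : Scheme) [IsIntegral X]
    (p : X ⟶ Spec (CommRingCat.of k)) [IsSeparated p] [LocallyOfFiniteType p] [QuasiCompact p]
    -- `μ` is a Radon measure on `|X|`:
    (μ : Measure (Cons X)) [IsFiniteMeasure μ] [μ.InnerRegular] :
    ∃ (x : ℕ → Cons X) (a : ℕ → ℝ), (∀ i, 0 ≤ a i) ∧
      μ = Measure.sum (fun i => ENNReal.ofReal (a i) • Measure.dirac (x i)) := by
  haveI : TopologicalSpace.NoetherianSpace X := noeth X p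
  haveI hne : Nonempty (Cons X) := ‹IsIntegral X›.nonempty
  -- the set of atoms
  set D : Set (Cons X) := {x | μ {x} ≠ 0} with hD
  have hDc : D.Countable := by
    have h := MeasureTheory.Measure.countable_meas_pos_of_disjoint_of_meas_iUnion_ne_top₀
      (μ := μ) (As := fun x : Cons X => {x})
      (fun x => (measurableSet_singleton x).nullMeasurableSet)
      (fun x y hxy => (Set.disjoint_singleton.mpr hxy).aedisjoint)
      (by rw [Set.iUnion_of_singleton]; exact measure_ne_top μ _)
    exact h.mono fun x hx => pos_iff_ne_zero.mpr hx
  have hDm : MeasurableSet D := hDc.measurableSet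
  -- the complement of the atoms is null
  have hDc0 : μ Dᶜ = 0 := by
    by_contra h
    obtain ⟨K, hKD, hKc, hKpos⟩ :=
      Measure.InnerRegular.innerRegular (μ := μ) hDm.compl 0 (pos_iff_ne_zero.mpr h)
    have h0 := compact_null μ hKc (fun x hx => not_ne_iff.mp (hKD hx))
    exact hKpos.ne' h0
  obtain ⟨x₀⟩ := hne
  obtain ⟨f, hf⟩ := Set.Countable.exists_eq_range (hDc.insert x₀) (Set.insert_nonempty _ _)
  set B : ℕ → Set (Cons X) := disjointed (fun n => ({f n} : Set (Cons X))) with hB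
  have hBm : ∀ i, MeasurableSet (B i) :=
    MeasurableSet.disjointed (fun n => measurableSet_singleton _)
  have hBd : Pairwise (Function.onFun Disjoint B) := disjoint_disjointed _
  have hBsub : ∀ i, B i ⊆ {f i} := disjointed_subset _
  refine ⟨f, fun i => (μ (B i)).toReal, fun i => ENNReal.toReal_nonneg, ?_⟩
  have hco : ∀ i, ENNReal.ofReal (μ (B i)).toReal = μ (B i) := fun i =>
    ENNReal.ofReal_toReal (measure_ne_top μ _)
  ext s hs
  rw [Measure.sum_apply _ hs]
  have key : ∀ i, (ENNReal.ofReal (μ (B i)).toReal • Measure.dirac (f i)) s = μ (s ∩ B i) := by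
    intro i
    rw [Measure.smul_apply, Measure.dirac_apply' _ hs, hco, smul_eq_mul]
    by_cases hfi : f i ∈ s
    · rw [Set.indicator_of_mem hfi, Pi.one_apply, mul_one,
        Set.inter_eq_self_of_subset_right ((hBsub i).trans (Set.singleton_subset_iff.mpr hfi))]
    · rw [Set.indicator_of_notMem hfi, mul_zero]
      have hempty : s ∩ B i = ∅ := by
        refine Set.eq_empty_iff_forall_notMem.mpr fun x hx => hfi ?_
        have hx2 := hBsub i hx.2
        rw [Set.mem_singleton_iff] at hx2
        exact hx2 ▸ hx.1
      rw [hempty, measure_empty]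
  have hrange : MeasurableSet (Set.range f) := (Set.countable_range f).measurableSet
  have hnull : μ (s \ Set.range f) = 0 := by
    refine measure_mono_null (fun x hx => ?_) hDc0
    intro hxD
    exact hx.2 (hf ▸ Set.mem_insert_of_mem x₀ hxD)
  calc μ s = μ (s ∩ Set.range f) + μ (s \ Set.range f) := (measure_inter_add_diff s hrange).symm
    _ = μ (s ∩ Set.range f) := by rw [hnull, add_zero]
    _ = μ (⋃ i, s ∩ B i) := by
        rw [← Set.inter_iUnion, hB, iUnion_disjointed, Set.iUnion_singleton_eq_range]
    _ = ∑' i, μ (s ∩ B i) :=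
        measure_iUnion (hBd.mono fun i j h =>
          h.mono Set.inter_subset_right Set.inter_subset_right) (fun i => hs.inter (hBm i))
    _ = ∑' i, (ENNReal.ofReal (μ (B i)).toReal • Measure.dirac (f i)) s :=
        tsum_congr fun i => (key i).symm
end
end

section
/- Every Radon measure μ on |X| with μ(|X|) > 0 has an atom: there exists a point x ∈ X with μ({x}) > 0. -/
open AlgebraicGeometry CategoryTheory MeasureTheory Filter Topology

noncomputable section

/-- A set of `X`, viewed as a set of `|X|`. -/
def cset {X : Scheme} (s : Set X) : Set (Cons X) := s

lemma consOpen_of_zclosed {X : Scheme} {s : Set X} (h : IsClosed s) :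
    IsOpen (cset s) :=
  TopologicalSpace.isOpen_generateFrom_of_mem (Or.inr h)

lemma consOpen_of_zopen {X : Scheme} {s : Set X} (h : IsOpen s) :
    IsOpen (cset s) :=
  TopologicalSpace.isOpen_generateFrom_of_mem (Or.inl h)

def ofCons {X : Scheme} (x : Cons X) : X := x

lemma mem_cset {X : Scheme} {s : Set X} {x : Cons X} : x ∈ cset s ↔ ofCons x ∈ s := Iff.rfl

lemma cset_compl {X : Scheme} (s : Set X) : cset sᶜ = (cset s)ᶜ := rfl

lemma measurableSet_singleton_cons {X : Scheme} (z : Cons X) :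
    MeasurableSet ({z} : Set (Cons X)) := by
  have : IsOpen ({z}ᶜ : Set (Cons X)) := by
    rw [isOpen_iff_forall_mem_open]
    intro y hy
    have hyz : y ≠ z := hy
    by_cases hzy : ofCons z ∈ closure ({ofCons y} : Set X)
    · -- then y ∉ closure {z}
      refine ⟨cset (closure ({ofCons z} : Set X))ᶜ, ?_,
        consOpen_of_zopen isClosed_closure.isOpen_compl, ?_⟩
      · intro w hw
        have hw' : ofCons w ∉ closure ({ofCons z} : Set X) := hw
        simp only [Set.mem_compl_iff, Set.mem_singleton_iff]
        rintro rfl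
        exact hw' (subset_closure rfl)
      · -- y ∈ (closure {z})ᶜ : else y ⤳ z and z ⤳ y give y = z
        show ofCons y ∉ closure ({ofCons z} : Set X)
        intro hmem
        have h1 : ofCons y ⤳ ofCons z := specializes_iff_mem_closure.mpr hzy
        have h2 : ofCons z ⤳ ofCons y := specializes_iff_mem_closure.mpr hmem
        exact hyz (congrArg toCons (h2.antisymm h1).eq.symm)
    · refine ⟨cset (closure ({ofCons y} : Set X)), ?_,
        consOpen_of_zclosed isClosed_closure,
        mem_cset.mpr (subset_closure rfl)⟩
      intro w hw
      have hw' : ofCons w ∈ closure ({ofCons y} : Set X) := hw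
      simp only [Set.mem_compl_iff, Set.mem_singleton_iff]
      rintro rfl
      exact hzy hw'
  exact (isOpen_compl_iff.mp this).measurableSet

lemma noetherianSpace_of_stmt1 (k : Type) [Field k] (X : Scheme)
    (p : X ⟶ Spec (CommRingCat.of k)) [LocallyOfFiniteType p] [QuasiCompact p] :
    TopologicalSpace.NoetherianSpace X := by
  have hcs : CompactSpace X := (quasiCompact_iff_compactSpace p).mp ‹_›
  have hGk : IsNoetherianRing Γ(Spec (CommRingCat.of k), ⊤) := by
    exact isNoetherianRing_of_ringEquiv k
      (Scheme.ΓSpecIso (CommRingCat.of k)).commRingCatIsoToRingEquiv.symm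
  have hln : IsLocallyNoetherian X := by
    apply isLocallyNoetherian_of_affine_cover (S := fun U : X.affineOpens => U)
      (iSup_affineOpens_eq_top X)
    intro U
    have e : (U : X.Opens) ≤ p ⁻¹ᵁ ⊤ := le_top
    have hft := LocallyOfFiniteType.finiteType_appLE p
      (isAffineOpen_top (Spec (CommRingCat.of k))) U.2 e
    letI := (p.appLE ⊤ U e).hom.toAlgebra
    have : Algebra.FiniteType Γ(Spec (CommRingCat.of k), ⊤) Γ(X, U) := hft
    exact Algebra.FiniteType.isNoetherianRing Γ(Spec (CommRingCat.of k), ⊤) Γ(X, U)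
  have : IsNoetherian X := ⟨⟩
  infer_instance

/-- every Radon measure `μ` on `|X|` with `μ(|X|) > 0` has an atom. -/
theorem stmt1
    -- `X` is a variety over the algebraically closed field `k`:
    (k : Type) [Field k] [IsAlgClosed k] (X : Scheme) [IsIntegral X]
    (p : X ⟶ Spec (CommRingCat.of k)) [IsSeparated p] [LocallyOfFiniteType p] [QuasiCompact p]
    -- `μ` is a Radon measure on `|X|` with positive total mass:
    (μ : Measure (Cons X)) [IsFiniteMeasure μ] [μ.InnerRegular]
    (hpos : 0 < μ Set.univ) :
    ∃ x : Cons X, 0 < μ {x} := by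
  by_contra hno
  push_neg at hno
  have hno' : ∀ x : Cons X, μ {x} = 0 := fun x => le_antisymm (hno x) (zero_le)
  have hNoeth : TopologicalSpace.NoetherianSpace X := noetherianSpace_of_stmt1 k X p
  -- the collection of Zariski-closed sets of positive measure
  set S : Set (TopologicalSpace.Closeds X) := {Z | 0 < μ (cset (Z : Set X))} with hS
  have hSne : S.Nonempty := by
    refine ⟨⊤, ?_⟩
    show 0 < μ (cset ((⊤ : TopologicalSpace.Closeds X) : Set X))
    rw [TopologicalSpace.Closeds.coe_top]
    exact hpos
  obtain ⟨Z, hZS, hZmin⟩ :=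
    (wellFounded_lt (α := TopologicalSpace.Closeds X)).has_min S hSne
  have hZpos : 0 < μ (cset (Z : Set X)) := hZS
  have hZmin' : ∀ Y : TopologicalSpace.Closeds X, Y < Z → μ (cset (Y : Set X)) = 0 := by
    intro Y hY
    by_contra hY0
    exact hZmin Y (pos_iff_ne_zero.mpr hY0) hY
  -- Z is irreducible
  have hZne : (Z : Set X).Nonempty := by
    rcases Set.eq_empty_or_nonempty (Z : Set X) with h | h
    · exfalso
      have h0 : μ (cset (Z : Set X)) = 0 := by
        rw [h]; exact measure_empty
      rw [h0] at hZpos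
      exact lt_irrefl _ hZpos
    · exact h
  have hZirr : IsIrreducible (Z : Set X) := by
    refine ⟨hZne, ?_⟩
    intro U V hU hV hZU hZV
    by_contra hUV
    push_neg at hUV
    have hYU : ((Z : Set X) \ U) ⊂ (Z : Set X) := by
      obtain ⟨x, hxZ, hxU⟩ := hZU
      exact ⟨Set.diff_subset, fun hsub => (hsub hxZ).2 hxU⟩
    have hYV : ((Z : Set X) \ V) ⊂ (Z : Set X) := by
      obtain ⟨x, hxZ, hxV⟩ := hZV
      exact ⟨Set.diff_subset, fun hsub => (hsub hxZ).2 hxV⟩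
    have hsplit : (Z : Set X) ⊆ ((Z : Set X) \ U) ∪ ((Z : Set X) \ V) := by
      intro x hx
      by_cases hxU : x ∈ U
      · right
        refine ⟨hx, fun hxV => ?_⟩
        have : x ∈ (Z : Set X) ∩ (U ∩ V) := ⟨hx, hxU, hxV⟩
        rw [hUV] at this
        exact this
      · exact Or.inl ⟨hx, hxU⟩
    have h1 : μ (cset ((Z : Set X) \ U)) = 0 :=
      hZmin' ⟨_, Z.isClosed.sdiff hU⟩ (SetLike.coe_ssubset_coe.mp hYU)
    have h2 : μ (cset ((Z : Set X) \ V)) = 0 :=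
      hZmin' ⟨_, Z.isClosed.sdiff hV⟩ (SetLike.coe_ssubset_coe.mp hYV)
    have : μ (cset (Z : Set X)) ≤
        μ (cset ((Z : Set X) \ U)) + μ (cset ((Z : Set X) \ V)) :=
      le_trans (measure_mono hsplit) (measure_union_le _ _)
    rw [h1, h2] at this
    simp only [add_zero] at this
    exact absurd (le_antisymm this (zero_le)) (ne_of_gt hZpos)
  -- generic point
  obtain ⟨z, hz⟩ := QuasiSober.sober hZirr Z.isClosed
  -- the measurable set Z \ {z} has the same positive measure
  have hZmeas : MeasurableSet (cset (Z : Set X)) := (consOpen_of_zclosed Z.isClosed).measurableSet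
  have hWmeas : MeasurableSet (cset (Z : Set X) \ {toCons z}) :=
    hZmeas.diff (measurableSet_singleton_cons _)
  have hWpos : 0 < μ (cset (Z : Set X) \ {toCons z}) := by
    rwa [measure_diff_null (hno' (toCons z))]
  -- inner regularity: a compact subset of positive measure
  obtain ⟨K, hKW, hKc, hKpos⟩ :=
    Measure.InnerRegular.innerRegular (μ := μ) hWmeas 0 hWpos
  -- cover K by the closures of its points, which are proper closed subsets of Z
  have hcover : K ⊆ ⋃ y : K, cset (closure ({ofCons (y : Cons X)} : Set X)) := by
    intro x hx
    exact Set.mem_iUnion.mpr ⟨⟨x, hx⟩, mem_cset.mpr (subset_closure rfl)⟩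
  obtain ⟨t, ht⟩ := hKc.elim_finite_subcover
    (fun y : K => cset (closure ({ofCons (y : Cons X)} : Set X)))
    (fun y => consOpen_of_zclosed isClosed_closure) hcover
  have hzero : ∀ y : K, μ (cset (closure ({ofCons (y : Cons X)} : Set X))) = 0 := by
    intro y
    have hyW : (y : Cons X) ∈ cset (Z : Set X) \ {toCons z} := hKW y.2
    have hyZ : ofCons (y : Cons X) ∈ (Z : Set X) := hyW.1
    have hyz : (y : Cons X) ≠ toCons z := hyW.2
    have hsub : closure ({ofCons (y : Cons X)} : Set X) ⊆ (Z : Set X) :=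
      closure_minimal (Set.singleton_subset_iff.mpr hyZ) Z.isClosed
    have hproper : closure ({ofCons (y : Cons X)} : Set X) ≠ (Z : Set X) := by
      intro heq
      apply hyz
      have h2 : z ⤳ ofCons (y : Cons X) := hz.specializes hyZ
      have h1 : ofCons (y : Cons X) ⤳ z :=
        specializes_iff_mem_closure.mpr (heq ▸ hz.mem)
      exact congrArg toCons (h1.antisymm h2).eq
    refine hZmin' ⟨_, isClosed_closure⟩ (lt_of_le_of_ne ?_ ?_)
    · exact hsub
    · intro hYZ
      exact hproper (congrArg TopologicalSpace.Closeds.carrier hYZ)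
  have hKle : μ K ≤ ∑ y ∈ t, μ (cset (closure ({ofCons (y : Cons X)} : Set X))) :=
    le_trans (measure_mono ht) (measure_biUnion_finset_le t _)
  rw [Finset.sum_congr rfl (fun y _ => hzero y)] at hKle
  simp only [Finset.sum_const_zero] at hKle
  exact absurd (le_antisymm hKle (zero_le)) (ne_of_gt hKpos)
end
end

section
/- Let μ be a Radon measure on |X| and x ∈ X a point such that μ(U_x) > 0 and μ({x}) = 0. Then there exists a point y ∈ U_x with y ≠ x such that μ(U_y) > 0. -/
open AlgebraicGeometry CategoryTheory MeasureTheory Filter Topology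

noncomputable section

/-- `U_x ⊆ |X|`: the Zariski closure of `{x}`, viewed as a subset of the constructible space. -/
def Ux {X : Scheme} (x : X) : Set (Cons X) := toCons '' (closure {x})

section Aux
variable {X : Scheme}

/-- A Zariski subset of `X`, viewed as a subset of `|X|`. -/
def cSet {X : Scheme} (s : Set X) : Set (Cons X) := toCons '' s

lemma cSet_eq (s : Set X) : cSet s = s := Set.image_id' _

lemma Ux_eq_cSet (x : X) : Ux x = cSet (closure {x}) := rfl

lemma consOpen_of_isOpen {s : Set X} (h : IsOpen s) : IsOpen (cSet s) := by
  rw [cSet_eq]; exact TopologicalSpace.isOpen_generateFrom_of_mem (Or.inl h)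

lemma consOpen_of_isClosed {s : Set X} (h : IsClosed s) : IsOpen (cSet s) := by
  rw [cSet_eq]; exact TopologicalSpace.isOpen_generateFrom_of_mem (Or.inr h)

lemma consClosed_of_isClosed {s : Set X} (h : IsClosed s) : IsClosed (cSet s) := by
  constructor
  have := consOpen_of_isOpen h.isOpen_compl
  rwa [cSet_eq] at this ⊢

lemma mem_cSet {s : Set X} {z : X} : toCons z ∈ cSet s ↔ z ∈ s := by
  rw [cSet_eq]; exact Iff.rfl

lemma Ux_isOpen (x : X) : IsOpen (Ux x) := consOpen_of_isClosed isClosed_closure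

lemma Ux_isClosed (x : X) : IsClosed (Ux x) := consClosed_of_isClosed isClosed_closure

lemma mem_Ux_self (x : X) : toCons x ∈ Ux x :=
  mem_cSet.2 (subset_closure rfl)

/-- Since the Zariski space of a scheme is T0, each singleton is closed in the
constructible topology. -/
lemma consClosed_singleton (x : X) : IsClosed ({toCons x} : Set (Cons X)) := by
  rw [← isOpen_compl_iff, isOpen_iff_forall_mem_open]
  intro y hy
  have hyx : (y : X) ≠ x := fun h => hy (show y = toCons x from h)
  by_cases h : (y : X) ∈ closure ({x} : Set X)
  · have hyx' : (x : X) ∉ closure ({(y : X)} : Set X) := by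
      intro hc
      exact hyx ((specializes_iff_mem_closure.2 hc).antisymm
        (specializes_iff_mem_closure.2 h)).eq
    refine ⟨cSet (closure {(y : X)}), ?_, consOpen_of_isClosed isClosed_closure,
      mem_cSet.2 (subset_closure rfl)⟩
    intro z hz hz'
    have hzx : z = toCons x := hz'
    rw [hzx] at hz
    exact hyx' (mem_cSet.1 hz)
  · refine ⟨cSet ((closure ({x} : Set X))ᶜ), ?_, consOpen_of_isOpen
      isClosed_closure.isOpen_compl, mem_cSet.2 h⟩
    intro z hz hz'
    have hzx : z = toCons x := hz'
    rw [hzx] at hz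
    exact (mem_cSet.1 hz) (subset_closure rfl)

end Aux

/-- if `μ` is a Radon measure on `|X|` and `x ∈ X` satisfies `μ(U_x) > 0` and
`μ({x}) = 0`, then there is a point `y ∈ U_x`, `y ≠ x`, with `μ(U_y) > 0`. -/
theorem stmt2
    -- `X` is a variety over the algebraically closed field `k`:
    (k : Type) [Field k] [IsAlgClosed k] (X : Scheme) [IsIntegral X]
    (p : X ⟶ Spec (CommRingCat.of k)) [IsSeparated p] [LocallyOfFiniteType p] [QuasiCompact p]
    -- `μ` is a Radon measure on `|X|`:
    (μ : Measure (Cons X)) [IsFiniteMeasure μ] [μ.InnerRegular]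
    (x : X) (hU : 0 < μ (Ux x)) (hx : μ {toCons x} = 0) :
    ∃ y : X, y ∈ closure ({x} : Set X) ∧ y ≠ x ∧ 0 < μ (Ux y) := by
  classical
  set A : Set (Cons X) := Ux x \ {toCons x} with hA
  have hAm : MeasurableSet A :=
    (Ux_isClosed x).measurableSet.diff (consClosed_singleton x).measurableSet
  have hμA : 0 < μ A := by
    have hle : μ (Ux x) ≤ μ A + μ {toCons x} := by
      refine le_trans (measure_mono ?_) (measure_union_le _ _)
      intro z hz
      by_cases h : z = toCons x
      · exact Or.inr (by simp [h])
      · exact Or.inl ⟨hz, h⟩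
    rw [hx, add_zero] at hle
    exact lt_of_lt_of_le hU hle
  obtain ⟨K, hKA, hKc, hKpos⟩ :=
    (‹μ.InnerRegular›.innerRegular) hAm 0 hμA
  obtain ⟨t, htK, hcov⟩ := hKc.elim_nhds_subcover (fun y : Cons X => Ux (y : X))
    (fun y _ => (Ux_isOpen (y : X)).mem_nhds (mem_Ux_self (y : X)))
  by_contra hcon
  push_neg at hcon
  have hzero : ∀ y ∈ t, μ (Ux (y : X)) = 0 := by
    intro y hy
    have hyA : y ∈ A := hKA (htK y hy)
    have hycl : (y : X) ∈ closure ({x} : Set X) := by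
      have h1 := hyA.1
      rw [Ux_eq_cSet] at h1
      exact mem_cSet.1 h1
    have hyx : (y : X) ≠ x := fun h => hyA.2 (show y = toCons x from h)
    have := hcon (y : X) hycl hyx
    simpa using this
  have hK0 : μ K = 0 := by
    refine measure_mono_null hcov ?_
    exact (measure_biUnion_null_iff t.countable_toSet).2 hzero
  simp [hK0] at hKpos
end
end

section
/- A sequence of points x_n ∈ X (n ≥ 0) is generic, i.e. for every proper Zariski-closed subset V of X one has x_n ∈ V for only finitely many n, if and only if the Dirac measures δ_{x_n} converge weakly on |X| to δ_η, the Dirac measure at the generic point of X. -/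
open AlgebraicGeometry CategoryTheory MeasureTheory Filter Topology

noncomputable section

lemma integral_dirac_cons {X : Scheme} (φ : Cons X → ℝ) (hφ : Continuous φ) (a : Cons X) :
    ∫ y, φ y ∂(Measure.dirac a) = φ a :=
  integral_dirac' φ a hφ.stronglyMeasurable

lemma isClopen_cons' {α : Type*} [TopologicalSpace α] {V : Set α} (hV : IsClosed V) :
    @IsClopen α (consTop α) V := by
  constructor
  · exact @IsClosed.mk α (consTop α) V (TopologicalSpace.GenerateOpen.basic _ (Or.inl hV.isOpen_compl))
  · exact TopologicalSpace.GenerateOpen.basic _ (Or.inr hV)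

/-- a sequence `x_n ∈ X` is generic (meets every proper Zariski-closed subset
only finitely often) if and only if the Dirac measures `δ_{x_n}` converge weakly on `|X|`
to `δ_η`, the Dirac measure at the generic point `η` of `X`. -/
theorem stmt3
    -- `X` is a variety over the algebraically closed field `k`:
    (k : Type) [Field k] [IsAlgClosed k] (X : Scheme) [IsIntegral X]
    (p : X ⟶ Spec (CommRingCat.of k)) [IsSeparated p] [LocallyOfFiniteType p] [QuasiCompact p]
    -- `η` is the generic point of `X`:
    (η : X) (hη : closure ({η} : Set X) = Set.univ)
    (x : ℕ → X) :
    (∀ V : Set X, IsClosed V → V ≠ Set.univ → {n : ℕ | x n ∈ V}.Finite) ↔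
      (∀ φ : Cons X → ℝ, Continuous φ →
        Tendsto (fun n => ∫ y, φ y ∂(Measure.dirac (toCons (x n)))) atTop
          (nhds (∫ y, φ y ∂(Measure.dirac (toCons η))))) := by
  have hηmem : ∀ {V : Set X}, IsClosed V → η ∈ V → V = Set.univ := by
    intro V hVc hηV
    have : closure ({η} : Set X) ⊆ V := hVc.closure_subset_iff.2 (by simpa using hηV)
    rw [hη] at this
    exact Set.eq_univ_of_univ_subset this
  constructor
  · intro hgen φ hφ
    simp only [integral_dirac_cons φ hφ]
    refine (hφ.tendsto (toCons η)).comp ?_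
    have key : Tendsto (fun n => x n) atTop
        (@nhds X (TopologicalSpace.generateFrom {s | IsOpen s ∨ IsClosed s}) η) := by
      rw [TopologicalSpace.tendsto_nhds_generateFrom_iff]
      rintro s (hs | hs) hηs
      · -- s Zariski-open, η ∈ s : complement is a proper closed set
        have hfin : {n : ℕ | x n ∈ sᶜ}.Finite := by
          refine hgen sᶜ hs.isClosed_compl fun h => ?_
          exact (h ▸ (Set.mem_compl_iff _ _).1) (Set.mem_univ η) hηs
        have hcof : ∀ᶠ n in cofinite, x n ∈ s := by
          refine (Set.Finite.eventually_cofinite_notMem hfin).mono fun n hn => ?_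
          simpa using hn
        exact Nat.cofinite_eq_atTop ▸ hcof
      · -- s Zariski-closed containing η : s = univ
        have := hηmem hs hηs
        subst this
        simp
    exact key
  · intro h V hVc hVne
    set φ : Cons X → ℝ := (show Set (Cons X) from V).indicator 1 with hφdef
    have hclopen' := isClopen_cons' hVc
    have hclopen : IsClopen (show Set (Cons X) from V) := hclopen'
    have hφc : Continuous φ :=
      continuous_indicator (by intro a ha; exact (Set.eq_empty_iff_forall_notMem.1 hclopen.frontier_eq a ha).elim) continuous_const.continuousOn
    have hT := h φ hφc
    simp only [integral_dirac_cons φ hφc] at hT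
    have hηφ : φ (toCons η) = 0 := by
      have : η ∉ V := fun hmem => hVne (hηmem hVc hmem)
      simp [hφdef, Set.indicator_apply, toCons, this]; exact Set.indicator_of_notMem this 1
    rw [hηφ] at hT
    have hev : ∀ᶠ n in atTop, φ (toCons (x n)) < 1/2 :=
      hT.eventually_lt_const (by norm_num)
    rcases eventually_atTop.1 hev with ⟨N, hN⟩
    refine (Set.finite_Iio N).subset fun n hn => ?_
    by_contra hnN
    have hx : φ (toCons (x n)) = 1 := Set.indicator_of_mem hn 1
    have := hN n (le_of_not_gt fun h => hnN h)
    rw [hx] at this; norm_num at this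
end
end

section
/- Let f : X → X be a dominant endomorphism of X (a dominant morphism of schemes over k) and x ∈ X a point whose forward orbit O_f(x) = {f^n(x) : n ≥ 0} is Zariski dense in X. Then for every sequence of intervals I_n ⊆ ℕ with #I_n → ∞, the probability measures (1/#I_n) Σ_{i ∈ I_n} δ_{f^i(x)} converge weakly on |X| to δ_η. -/
open AlgebraicGeometry CategoryTheory MeasureTheory Filter Topology

noncomputable section

section AuxCons

open TopologicalSpace

lemma consTop_le_nhds {α : Type*} [TopologicalSpace α] (F : Filter α) (a : α)
    (h : ∀ s : Set α, a ∈ s → (IsOpen s ∨ IsClosed s) → s ∈ F) :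
    F ≤ @nhds α (consTop α) a := by
  rw [consTop, nhds_generateFrom]
  exact le_iInf fun s => le_iInf fun hs => le_principal_iff.mpr (h s hs.1 hs.2)

lemma consTop_compactSpace {α : Type*} [TopologicalSpace α] [NoetherianSpace α] [QuasiSober α] :
    @CompactSpace α (consTop α) := by
  refine @CompactSpace.mk α (consTop α) ?_
  rw [@isCompact_iff_ultrafilter_le_nhds α (consTop α)]
  intro F _
  obtain ⟨K, hKF, hKmin⟩ := (wellFounded_lt (α := Closeds α)).has_min
    {C : Closeds α | (C : Set α) ∈ F} ⟨⊤, F.univ_mem⟩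
  have hKle : ∀ C : Closeds α, (C : Set α) ∈ F → K ≤ C := by
    intro C hC
    have h1 : ((K ⊓ C : Closeds α) : Set α) ∈ F := F.inter_mem hKF hC
    have := hKmin _ h1
    have h2 : K ⊓ C = K := by
      rcases lt_or_eq_of_le (inf_le_left : K ⊓ C ≤ K) with h | h
      · exact absurd h this
      · exact h
    exact h2 ▸ inf_le_right
  have hKirr : IsIrreducible (K : Set α) := by
    constructor
    · exact F.nonempty_of_mem hKF
    · rw [isPreirreducible_iff_isClosed_union_isClosed]
      intro C₁ C₂ hC₁ hC₂ hsub
      have : (K : Set α) ∩ C₁ ∪ (K : Set α) ∩ C₂ ∈ F := by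
        rw [← Set.inter_union_distrib_left]
        exact F.inter_mem hKF (mem_of_superset hKF hsub)
      rcases Ultrafilter.union_mem_iff.mp this with h | h
      · left
        have := hKle (K ⊓ ⟨C₁, hC₁⟩) (by simpa using h)
        exact fun y hy => (this hy).2
      · right
        have := hKle (K ⊓ ⟨C₂, hC₂⟩) (by simpa using h)
        exact fun y hy => (this hy).2
  obtain ⟨a, ha⟩ := QuasiSober.sober hKirr K.isClosed
  refine ⟨a, trivial, consTop_le_nhds F a ?_⟩
  rintro s has (hs | hs)
  · by_contra hsF
    have : sᶜ ∈ F := Ultrafilter.compl_mem_iff_notMem.mpr hsF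
    have hKs : K ≤ ⟨sᶜ, hs.isClosed_compl⟩ := hKle _ this
    have haK : a ∈ (K : Set α) := ha ▸ subset_closure rfl
    exact (hKs haK) has
  · by_contra hsF
    have hsc : sᶜ ∈ F := Ultrafilter.compl_mem_iff_notMem.mpr hsF
    obtain ⟨y, hy1, hy2⟩ := F.nonempty_of_mem (F.inter_mem hsc hKF)
    have hy3 : y ∈ closure ({a} : Set α) := ha ▸ hy2
    obtain ⟨z, hz1, hz2⟩ := (mem_closure_iff.mp hy3) sᶜ hs.isOpen_compl hy1
    rw [Set.mem_singleton_iff] at hz2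
    exact hz1 (hz2 ▸ has)

lemma exists_zariski_open {α : Type*} [TopologicalSpace α] {U : Set α}
    (hU : IsOpen[consTop α] U) {η : α} (hη : closure ({η} : Set α) = Set.univ)
    (hmem : η ∈ U) : ∃ V : Set α, IsOpen V ∧ η ∈ V ∧ V ⊆ U := by
  have hU' : TopologicalSpace.GenerateOpen {s : Set α | IsOpen s ∨ IsClosed s} U := hU
  clear hU
  induction hU' with
  | basic s hs =>
      rcases hs with hs | hs
      · exact ⟨s, hs, hmem, le_refl s⟩
      · refine ⟨Set.univ, isOpen_univ, trivial, ?_⟩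
        have : closure ({η} : Set α) ⊆ s := hs.closure_subset_iff.mpr (by simpa using hmem)
        rw [hη] at this
        exact fun y _ => this trivial
  | univ => exact ⟨Set.univ, isOpen_univ, trivial, fun y _ => trivial⟩
  | inter s t hs ht ihs iht =>
      obtain ⟨V₁, h1, h2, h3⟩ := ihs hmem.1
      obtain ⟨V₂, h4, h5, h6⟩ := iht hmem.2
      exact ⟨V₁ ∩ V₂, h1.inter h4, ⟨h2, h5⟩, fun y hy => ⟨h3 hy.1, h6 hy.2⟩⟩
  | sUnion S hS ih =>
      obtain ⟨t, htS, hηt⟩ := hmem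
      obtain ⟨V, h1, h2, h3⟩ := ih t htS hηt
      exact ⟨V, h1, h2, fun y hy => ⟨t, htS, h3 hy⟩⟩

end AuxCons

section Dyn

open TopologicalSpace Filter Topology

attribute [local instance] Classical.propDecidable

variable {α : Type*} [TopologicalSpace α] [IrreducibleSpace α] [T0Space α]
variable {f : α → α} {η x : α}

lemma tails_dense (hfc : Continuous f) (hη : closure ({η} : Set α) = Set.univ)
    (hfη : f η = η) (hx : Dense (Set.range fun n : ℕ => f^[n] x)) (m : ℕ) :
    Dense (Set.range fun n : ℕ => f^[m + n] x) := by
  induction m with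
  | zero => simpa using hx
  | succ m ih =>
    by_contra h
    have hsub : (Set.range fun n : ℕ => f^[m + n] x) ⊆
        {f^[m] x} ∪ Set.range fun n : ℕ => f^[m + 1 + n] x := by
      rintro y ⟨n, rfl⟩
      cases n with
      | zero => exact Or.inl (by simp)
      | succ n => exact Or.inr ⟨n, by show f^[m + 1 + n] x = f^[m + (n + 1)] x; congr 1; omega⟩
    have huniv : (Set.univ : Set α) ⊆
        closure {f^[m] x} ∪ closure (Set.range fun n : ℕ => f^[m + 1 + n] x) := by
      rw [← closure_union, ← ih.closure_eq]
      exact closure_mono hsub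
    rcases isPreirreducible_iff_isClosed_union_isClosed.mp
        (IrreducibleSpace.isIrreducible_univ α).2 _ _ isClosed_closure isClosed_closure
        (by simpa using huniv) with h1 | h2
    · have hgen : f^[m] x = η := by
        have g1 : IsGenericPoint (f^[m] x) Set.univ :=
          isGenericPoint_def.mpr (Set.eq_univ_of_univ_subset h1)
        exact g1.eq (isGenericPoint_def.mpr hη)
      apply h
      have hmem : η ∈ Set.range fun n : ℕ => f^[m + 1 + n] x :=
        ⟨0, by simp [Function.iterate_succ_apply', hgen, hfη]⟩
      rw [dense_iff_closure_eq]
      apply Set.eq_univ_of_univ_subset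
      rw [← hη]
      exact closure_mono (Set.singleton_subset_iff.mpr hmem)
    · exact h (dense_iff_closure_eq.mpr (Set.eq_univ_of_univ_subset h2))

lemma visits_sparse [NoetherianSpace α]
    (hfc : Continuous f) (hη : closure ({η} : Set α) = Set.univ) (hfη : f η = η)
    (hx : Dense (Set.range fun n : ℕ => f^[n] x))
    (I : ℕ → Finset ℕ) (hI : ∀ n, ∃ a b : ℕ, I n = Finset.Icc a b)
    (hcard : Tendsto (fun n => (I n).card) atTop atTop)
    (Z : Set α) (hZc : IsClosed Z) (hηZ : η ∉ Z) :
    ∀ ε : ℝ, 0 < ε →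
      ∀ᶠ n in atTop, (((I n).filter fun i => f^[i] x ∈ Z).card : ℝ) ≤ ε * (I n).card := by
  suffices H : ∀ D : Closeds α, η ∉ (D : Set α) → ∀ ε : ℝ, 0 < ε →
      ∀ᶠ n in atTop,
        (((I n).filter fun i => f^[i] x ∈ (D : Set α)).card : ℝ) ≤ ε * (I n).card by
    exact H ⟨Z, hZc⟩ hηZ
  intro D₀
  induction D₀ using (wellFounded_lt (α := Closeds α)).induction with
  | _ D IH =>
  intro hηD ε hε
  by_contra hcon
  have hfreq : ∃ᶠ n in atTop,
      ε * (I n).card < (((I n).filter fun i => f^[i] x ∈ (D : Set α)).card : ℝ) :=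
    (Filter.not_eventually.mp hcon).mono fun n h => not_le.mp h
  set T : ℕ := ⌈(8 : ℝ) / ε⌉₊ with hTdef
  have hT8 : (8 : ℝ) / ε ≤ T := Nat.le_ceil _
  have hT1 : 1 ≤ T := Nat.one_le_ceil_iff.mpr (by positivity)
  have hT0 : 0 < T := hT1
  by_cases hcase : ∃ d ∈ Finset.Icc 1 T, (D : Set α) ⊆ f^[d] ⁻¹' (D : Set α)
  · -- forward invariance case: derive a contradiction with density of tails
    obtain ⟨d, hdmem, hdsub⟩ := hcase
    have hd1 : 1 ≤ d := (Finset.mem_Icc.mp hdmem).1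
    obtain ⟨n₀, -, hn₀⟩ := Filter.frequently_atTop.mp hfreq 0
    have hpos : 0 < ((I n₀).filter fun i => f^[i] x ∈ (D : Set α)).card := by
      rcases Nat.eq_zero_or_pos ((I n₀).filter fun i => f^[i] x ∈ (D : Set α)).card with h0 | h0
      · exfalso
        rw [h0] at hn₀
        have hnn : (0:ℝ) ≤ ε * (I n₀).card := by positivity
        push_cast at hn₀
        linarith
      · exact h0
    obtain ⟨i₀, hi₀⟩ := Finset.card_pos.mp hpos
    have hi₀D : f^[i₀] x ∈ (D : Set α) := (Finset.mem_filter.mp hi₀).2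
    have hinv : ∀ k : ℕ, f^[i₀ + k * d] x ∈ (D : Set α) := by
      intro k
      induction k with
      | zero => simpa using hi₀D
      | succ k ih =>
        have he : f^[i₀ + (k + 1) * d] x = f^[d] (f^[i₀ + k * d] x) := by
          rw [← Function.iterate_add_apply]
          congr 1
          ring
        rw [he]
        exact hdsub ih
    set B : Set α := ⋃ j ∈ Finset.Icc 1 d, f^[j] ⁻¹' (D : Set α) with hB
    have hBc : IsClosed B := by
      apply Set.Finite.isClosed_biUnion (Finset.finite_toSet _)
      intro j _
      exact D.isClosed.preimage (hfc.iterate j)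
    have hηB : η ∉ B := by
      rw [hB]
      simp only [Set.mem_iUnion, Set.mem_preimage]
      rintro ⟨j, hj, hmem⟩
      rw [Function.iterate_fixed hfη] at hmem
      exact hηD hmem
    have htail : (Set.range fun n : ℕ => f^[i₀ + n] x) ⊆ B := by
      rintro y ⟨n, rfl⟩
      have hrd : n % d < d := Nat.mod_lt _ (by omega)
      set j := d - n % d with hjdef
      have hqr : d * (n / d) + n % d = n := Nat.div_add_mod n d
      have key : f^[j] (f^[i₀ + n] x) = f^[i₀ + (n / d + 1) * d] x := by
        rw [← Function.iterate_add_apply]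
        congr 1
        have he : (n / d + 1) * d = d * (n / d) + d := by ring
        rw [he]
        generalize d * (n / d) = s at hqr ⊢
        omega
      have hmem : f^[i₀ + n] x ∈ f^[j] ⁻¹' (D : Set α) := by
        rw [Set.mem_preimage, key]
        exact hinv (n / d + 1)
      rw [hB]
      exact Set.mem_biUnion (Finset.mem_Icc.mpr ⟨by omega, by omega⟩) hmem
    have hDense := tails_dense hfc hη hfη hx i₀
    have : (Set.univ : Set α) ⊆ B := by
      rw [← hDense.closure_eq]
      exact hBc.closure_subset_iff.mpr htail
    exact hηB (this trivial)
  · -- all intersections are strictly smaller: use induction hypothesis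
    push_neg at hcase
    set ε' : ℝ := ε / (8 * T) with hε'def
    have hTR : (0:ℝ) < T := by exact_mod_cast hT0
    have hε' : 0 < ε' := by positivity
    set W : ℕ → Closeds α := fun d =>
      D ⊓ ⟨f^[d] ⁻¹' (D : Set α), D.isClosed.preimage (hfc.iterate d)⟩ with hWdef
    have hWmem : ∀ d y, y ∈ (W d : Set α) ↔ (y ∈ (D : Set α) ∧ f^[d] y ∈ (D : Set α)) := by
      intro d y
      rw [hWdef]
      rfl
    have hIH : ∀ᶠ n in atTop, ∀ d ∈ Finset.Icc 1 T,
        (((I n).filter fun i => f^[i] x ∈ (W d : Set α)).card : ℝ)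
          ≤ ε' * (I n).card := by
      rw [Filter.eventually_all_finset]
      intro d hd
      have hlt : W d < D := by
        refine lt_of_le_of_ne inf_le_left ?_
        intro hEq
        refine hcase d hd fun y hy => ?_
        have h2 : y ∈ (W d : Set α) := by rw [hEq]; exact hy
        exact ((hWmem d y).mp h2).2
      exact IH _ hlt (fun hmem => hηD ((hWmem d η).mp hmem).1) ε' hε'
    have hL : ∀ᶠ n in atTop, (⌈(2:ℝ)/ε⌉₊ + 1 : ℕ) ≤ (I n).card :=
      hcard.eventually_ge_atTop _
    obtain ⟨n, hn1, hn2, hn3⟩ := (hfreq.and_eventually (hIH.and hL)).exists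
    -- work at this n
    obtain ⟨a, b, hab⟩ := hI n
    set S : Finset ℕ := (I n).filter fun i => f^[i] x ∈ (D : Set α) with hSdef
    set L : ℕ := (I n).card with hLdef
    have hL1 : 1 ≤ L := le_trans (by omega) hn3
    have hba : a ≤ b := by
      by_contra hba
      have : (Finset.Icc a b).card = 0 := by
        rw [Finset.card_eq_zero, Finset.Icc_eq_empty]
        omega
      rw [hLdef, hab] at hL1
      omega
    have hLab : L = b - a + 1 := by
      rw [hLdef, hab, Nat.card_Icc]
      omega
    set Bad : Finset ℕ := S.filter (fun i => ∀ d ∈ Finset.Icc 1 T, i + d ∉ S) with hBaddef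
    set Good : Finset ℕ := S.filter (fun i => ¬ ∀ d ∈ Finset.Icc 1 T, i + d ∉ S) with hGooddef
    have hsplit : Bad.card + Good.card = S.card := by
      rw [hGooddef, hBaddef]
      exact Finset.card_filter_add_card_filter_not
        (p := fun i => ∀ d ∈ Finset.Icc 1 T, i + d ∉ S)
    -- Bad is T-separated
    have hBadCard : Bad.card ≤ (b - a) / T + 1 := by
      have hmaps : ∀ i ∈ Bad, (i - a) / T ∈ Finset.range ((b - a) / T + 1) := by
        intro i hi
        have hiS : i ∈ S := Finset.mem_filter.mp hi |>.1
        have hiI : i ∈ Finset.Icc a b := by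
          rw [← hab]; exact (Finset.mem_filter.mp hiS).1
        rw [Finset.mem_Icc] at hiI
        rw [Finset.mem_range, Nat.lt_succ_iff]
        exact Nat.div_le_div_right (by omega)
      have hinj : ∀ i ∈ Bad, ∀ i' ∈ Bad, (i - a) / T = (i' - a) / T → i = i' := by
        intro i hi i' hi' heq
        by_contra hne
        -- wlog i < i'
        wlog hlt : i < i' generalizing i i'
        · exact this i' hi' i hi heq.symm (Ne.symm hne) (by omega)
        have hiS : i ∈ S := (Finset.mem_filter.mp hi).1
        have hi'S : i' ∈ S := (Finset.mem_filter.mp hi').1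
        have hiI : i ∈ Finset.Icc a b := by
          rw [← hab]; exact (Finset.mem_filter.mp hiS).1
        rw [Finset.mem_Icc] at hiI
        -- same block => i' - i ≤ T
        have h1 : (i - a) / T * T ≤ i - a := Nat.div_mul_le_self _ _
        have h2' : i' - a < (i - a) / T * T + T := by
          have hlt2 : (i' - a) / T < (i - a) / T + 1 := by omega
          have h2 := (Nat.div_lt_iff_lt_mul hT0).mp hlt2
          calc i' - a < ((i - a) / T + 1) * T := h2
            _ = (i - a) / T * T + T := by ring
        have hdleT : i' - i ≤ T := by
          generalize (i - a) / T * T = s at h1 h2'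
          omega
        have hbad : ∀ d ∈ Finset.Icc 1 T, i + d ∉ S := (Finset.mem_filter.mp hi).2
        exact hbad (i' - i) (Finset.mem_Icc.mpr ⟨by omega, hdleT⟩) (by
          rw [show i + (i' - i) = i' from by omega]; exact hi'S)
      calc Bad.card ≤ (Finset.range ((b - a) / T + 1)).card :=
            Finset.card_le_card_of_injOn _ hmaps hinj
        _ = (b - a) / T + 1 := by rw [Finset.card_range]
    -- Good is covered by the intersections
    have hGoodCard : Good.card ≤
        ∑ d ∈ Finset.Icc 1 T,
          ((I n).filter fun i => f^[i] x ∈ (W d : Set α)).card := by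
      have hsub : Good ⊆ (Finset.Icc 1 T).biUnion
          (fun d => (I n).filter fun i => f^[i] x ∈ (W d : Set α)) := by
        intro i hi
        obtain ⟨hiS, hex⟩ := Finset.mem_filter.mp hi
        push_neg at hex
        obtain ⟨d, hd, hidS⟩ := hex
        rw [Finset.mem_biUnion]
        refine ⟨d, hd, ?_⟩
        obtain ⟨hiI, hiD⟩ := Finset.mem_filter.mp hiS
        refine Finset.mem_filter.mpr ⟨hiI, (hWmem d _).mpr ⟨hiD, ?_⟩⟩
        rw [← Function.iterate_add_apply]
        have h3 : i + d ∈ S := hidS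
        rw [show d + i = i + d from by omega]
        exact (Finset.mem_filter.mp h3).2
      exact le_trans (Finset.card_le_card hsub) (Finset.card_biUnion_le)
    -- now the numeric contradiction
    have hcast1 : (S.card : ℝ) > ε * L := hn1
    have hTne : (T:ℝ) ≠ 0 := ne_of_gt hTR
    have hGR : (Good.card : ℝ) ≤ ε * L / 8 := by
      calc (Good.card : ℝ) ≤
          ∑ d ∈ Finset.Icc 1 T, (((I n).filter fun i =>
            f^[i] x ∈ (W d : Set α)).card : ℝ) := by
            exact_mod_cast hGoodCard
        _ ≤ ∑ d ∈ Finset.Icc 1 T, ε' * L := Finset.sum_le_sum fun d hd => hn2 d hd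
        _ = ((Finset.Icc 1 T).card : ℝ) * (ε' * L) := by
            rw [Finset.sum_const, nsmul_eq_mul]
        _ = (T : ℝ) * (ε' * L) := by rw [Nat.card_Icc]; norm_num
        _ = ε * L / 8 := by rw [hε'def]; field_simp
    have hBR : (Bad.card : ℝ) ≤ ε * L / 8 + 1 := by
      have h1 : ((b - a : ℕ) : ℝ) ≤ (L : ℝ) - 1 := by
        rw [hLab]; push_cast [hba]; linarith
      have h2 : (((b - a) / T : ℕ) : ℝ) ≤ ((b - a : ℕ) : ℝ) / T := Nat.cast_div_le
      have h3 : ((b - a : ℕ) : ℝ) / T ≤ (L : ℝ) / T := by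
        gcongr
        linarith
      have h4 : (L : ℝ) / T ≤ ε * L / 8 := by
        rw [div_le_iff₀ hTR]
        have h5 : 8 / ε ≤ (T : ℝ) := hT8
        have h6 : (8 : ℝ) ≤ ε * T := by
          rw [div_le_iff₀ hε] at h5
          linarith
        have hLpos : (0:ℝ) ≤ L := Nat.cast_nonneg _
        nlinarith
      calc (Bad.card : ℝ) ≤ (((b - a) / T : ℕ) : ℝ) + 1 := by exact_mod_cast hBadCard
        _ ≤ ε * L / 8 + 1 := by linarith
    have hLbig : (2:ℝ) / ε ≤ L := by
      have hc1 : ((⌈(2:ℝ)/ε⌉₊ : ℝ) + 1) ≤ (L:ℝ) := by exact_mod_cast hn3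
      have hc2 : (2:ℝ)/ε ≤ (⌈(2:ℝ)/ε⌉₊ : ℝ) := Nat.le_ceil _
      linarith
    have hεL : (2:ℝ) ≤ ε * L := by
      rw [div_le_iff₀ hε] at hLbig
      linarith
    have hScast : (S.card : ℝ) = (Bad.card : ℝ) + (Good.card : ℝ) := by
      exact_mod_cast hsplit.symm
    linarith


lemma avg_tendsto {I : ℕ → Finset ℕ} (hcard : Filter.Tendsto (fun n => (I n).card) Filter.atTop Filter.atTop)
    (a : ℕ → ℝ) (c M : ℝ) (hM : ∀ i, |a i - c| ≤ M)
    (h : ∀ ε : ℝ, 0 < ε → ∃ P : ℕ → Prop, (∀ i, ¬ P i → |a i - c| ≤ ε) ∧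
        ∀ᶠ n in Filter.atTop, (((I n).filter P).card : ℝ) ≤ ε * (I n).card) :
    Filter.Tendsto (fun n => ((I n).card : ℝ)⁻¹ * ∑ i ∈ I n, a i) Filter.atTop (nhds c) := by
  have hM0 : (0:ℝ) ≤ M := le_trans (abs_nonneg _) (hM 0)
  refine Metric.tendsto_nhds.mpr fun ε hε => ?_
  set δ : ℝ := ε / (3 * (M + 1)) with hδdef
  have hδ : 0 < δ := by positivity
  obtain ⟨P, hP1, hP2⟩ := h δ hδ
  have hL1 : ∀ᶠ n in Filter.atTop, 1 ≤ (I n).card := hcard.eventually_ge_atTop 1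
  filter_upwards [hP2, hL1] with n hs hl
  set L : ℝ := ((I n).card : ℝ) with hL
  have hL0 : (0:ℝ) < L := by rw [hL]; exact_mod_cast hl
  have hLne : L ≠ 0 := ne_of_gt hL0
  set cnt : ℝ := (((I n).filter P).card : ℝ) with hcnt
  have hbound1 : (∑ i ∈ (I n).filter P, |a i - c|) ≤ cnt * M := by
    calc (∑ i ∈ (I n).filter P, |a i - c|)
        ≤ ((I n).filter P).card • M := Finset.sum_le_card_nsmul _ _ M (fun i _ => hM i)
      _ = cnt * M := by rw [nsmul_eq_mul, hcnt]
  have hbound2 : (∑ i ∈ (I n).filter (fun i => ¬ P i), |a i - c|) ≤ L * δ := by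
    calc (∑ i ∈ (I n).filter (fun i => ¬ P i), |a i - c|)
        ≤ ((I n).filter (fun i => ¬ P i)).card • δ :=
          Finset.sum_le_card_nsmul _ _ _ (fun i hi => hP1 i (Finset.mem_filter.mp hi).2)
      _ = (((I n).filter (fun i => ¬ P i)).card : ℝ) * δ := by rw [nsmul_eq_mul]
      _ ≤ L * δ := by
          apply mul_le_mul_of_nonneg_right _ hδ.le
          rw [hL]
          exact_mod_cast Finset.card_filter_le _ _
  have h1 : L⁻¹ * (∑ i ∈ I n, a i) - c = L⁻¹ * ∑ i ∈ I n, (a i - c) := by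
    rw [Finset.sum_sub_distrib, Finset.sum_const, nsmul_eq_mul, ← hL]
    field_simp
  have h2 : |∑ i ∈ I n, (a i - c)| ≤ cnt * M + L * δ := by
    calc |∑ i ∈ I n, (a i - c)| ≤ ∑ i ∈ I n, |a i - c| := Finset.abs_sum_le_sum_abs _ _
      _ = (∑ i ∈ (I n).filter P, |a i - c|)
          + (∑ i ∈ (I n).filter (fun i => ¬ P i), |a i - c|) :=
        (Finset.sum_filter_add_sum_filter_not (I n) P _).symm
      _ ≤ cnt * M + L * δ := add_le_add hbound1 hbound2
  have h3 : cnt * M ≤ δ * M * L := by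
    have h4 := mul_le_mul_of_nonneg_right hs hM0
    calc cnt * M ≤ (δ * L) * M := h4
      _ = δ * M * L := by ring
  have h5 : δ * M ≤ ε / 3 := by
    rw [hδdef, div_mul_eq_mul_div, div_le_div_iff₀ (by positivity) (by norm_num : (0:ℝ) < 3)]
    nlinarith
  have h6 : δ ≤ ε / 3 := by
    rw [hδdef, div_le_div_iff₀ (by positivity) (by norm_num : (0:ℝ) < 3)]
    nlinarith [mul_nonneg hε.le hM0]
  calc dist (L⁻¹ * ∑ i ∈ I n, a i) c = L⁻¹ * |∑ i ∈ I n, (a i - c)| := by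
        rw [Real.dist_eq, h1, abs_mul, abs_of_nonneg (inv_nonneg.mpr hL0.le)]
    _ ≤ L⁻¹ * (δ * M * L + L * δ) := by
        apply mul_le_mul_of_nonneg_left _ (inv_nonneg.mpr hL0.le)
        linarith
    _ = δ * M + δ := by field_simp
    _ ≤ ε / 3 + ε / 3 := add_le_add h5 h6
    _ < ε := by linarith

end Dyn

set_option maxHeartbeats 1000000 in
/-- DML in the form of equidistribution: if `f : X → X` is a dominant
endomorphism of a variety `X` over `k` and `x ∈ X` has Zariski dense forward orbit, then for
every sequence of intervals `I_n ⊆ ℕ` with `#I_n → ∞`, the probability measures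
`(1/#I_n) Σ_{i ∈ I_n} δ_{f^i(x)}` converge weakly on `|X|` to `δ_η`. -/
theorem stmt4
    -- `X` is a variety over the algebraically closed field `k`:
    (k : Type) [Field k] [IsAlgClosed k] (X : Scheme) [IsIntegral X]
    (p : X ⟶ Spec (CommRingCat.of k)) [IsSeparated p] [LocallyOfFiniteType p] [QuasiCompact p]
    -- `η` is the generic point of `X`:
    (η : X) (hη : closure ({η} : Set X) = Set.univ)
    -- `f` is a dominant endomorphism of `X` over `k`:
    (f : X ⟶ X) (hf : f ≫ p = p) [IsDominant f]
    -- `x` has Zariski dense forward orbit: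
    (x : X) (hx : Dense (Set.range fun n : ℕ => (fun y : X => f.base y)^[n] x))
    -- `I_n` is a sequence of intervals in `ℕ` with `#I_n → ∞`:
    (I : ℕ → Finset ℕ) (hI : ∀ n, ∃ a b : ℕ, I n = Finset.Icc a b)
    (hcard : Tendsto (fun n => (I n).card) atTop atTop) :
    ∀ φ : Cons X → ℝ, Continuous φ →
      Tendsto
        (fun n => ∫ y, φ y ∂(((I n).card : ENNReal)⁻¹ •
          ∑ i ∈ I n, Measure.dirac (toCons ((fun y : X => f.base y)^[i] x))))
        atTop (nhds (∫ y, φ y ∂(Measure.dirac (toCons η)))) := by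
  intro φ hφ
  -- Noetherianity of the underlying space
  haveI hln : IsLocallyNoetherian X := by
    constructor
    intro U
    have hle : U.1 ≤ p ⁻¹ᵁ ⊤ := le_top
    have hft := LocallyOfFiniteType.finiteType_of_affine_subset
      (f := p) (isAffineOpen_top _) (V := U.1) U.2 hle
    have hNk : IsNoetherianRing Γ(Spec (CommRingCat.of k), ⊤) := by
      have e := (Scheme.ΓSpecIso (CommRingCat.of k)).commRingCatIsoToRingEquiv
      exact isNoetherianRing_of_ringEquiv k e.symm
    letI := (p.appLE ⊤ U hle).hom.toAlgebra
    haveI : Algebra.FiniteType Γ(Spec (CommRingCat.of k), ⊤) Γ(X, U) := hft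
    exact Algebra.FiniteType.isNoetherianRing Γ(Spec (CommRingCat.of k), ⊤) Γ(X, U)
  haveI : CompactSpace X := (quasiCompact_iff_compactSpace p).mp inferInstance
  haveI : IsNoetherian X := ⟨⟩
  haveI hns : TopologicalSpace.NoetherianSpace X := inferInstance
  -- the generic point is fixed
  set F : X → X := fun y => f.base y with hFdef
  have hfc : Continuous F := f.base.hom.continuous
  have hηgen : IsGenericPoint η Set.univ := isGenericPoint_def.mpr hη
  have hfη : F η = η := by
    have hdr : DenseRange f.base := f.denseRange
    have h2 : Set.range F ⊆ closure {F η} := by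
      rintro y ⟨z, rfl⟩
      have hspec : η ⤳ z := hηgen.specializes trivial
      exact specializes_iff_mem_closure.mp (hspec.map hfc)
    have h1 : closure ({F η} : Set X) = Set.univ := by
      apply Set.eq_univ_of_univ_subset
      calc (Set.univ : Set X) = closure (Set.range F) := hdr.closure_range.symm
        _ ⊆ closure (closure {F η}) := closure_mono h2
        _ = closure {F η} := closure_closure
    exact ((isGenericPoint_def.mpr h1).eq hηgen)
  -- compactness and boundedness
  haveI hcs : CompactSpace (Cons X) := consTop_compactSpace (α := X)
  obtain ⟨M, hM⟩ := isCompact_univ.exists_bound_of_continuousOn (hφ.continuousOn (s := Set.univ))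
  -- measurability and the value of the integrals
  have hφm : Measurable φ := hφ.measurable
  have hsm : StronglyMeasurable φ := hφm.stronglyMeasurable
  have hdint : ∀ y : Cons X, ∫ z, φ z ∂(Measure.dirac y) = φ y := fun y =>
    integral_dirac' φ y hsm
  have hint : ∀ y : Cons X, Integrable φ (Measure.dirac y) := by
    intro y
    refine ⟨hsm.aestronglyMeasurable, ?_⟩
    have hnn : Measurable fun z : Cons X => ‖φ z‖ₑ := hφm.enorm
    show ∫⁻ z, ‖φ z‖ₑ ∂(Measure.dirac y) < ⊤
    rw [lintegral_dirac' y hnn]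
    exact enorm_lt_top
  have hμ : ∀ n, (∫ z, φ z ∂(((I n).card : ENNReal)⁻¹ •
        ∑ i ∈ I n, Measure.dirac (toCons (F^[i] x))))
      = ((I n).card : ℝ)⁻¹ * ∑ i ∈ I n, φ (toCons (F^[i] x)) := by
    intro n
    rw [integral_smul_measure, integral_finset_sum_measure (fun i _ => hint _)]
    simp only [hdint]
    rw [ENNReal.toReal_inv, ENNReal.toReal_natCast, smul_eq_mul]
  simp only [hμ, hdint]
  have hMc : ‖φ (toCons η)‖ ≤ M := hM _ trivial
  have hM0 : (0:ℝ) ≤ M := le_trans (norm_nonneg _) hMc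
  apply avg_tendsto hcard (fun i => φ (toCons (F^[i] x))) (φ (toCons η)) (2*M+1)
  · intro i
    have h1 : ‖φ (toCons (F^[i] x))‖ ≤ M := hM _ trivial
    rw [Real.norm_eq_abs] at h1 hMc
    calc |φ (toCons (F^[i] x)) - φ (toCons η)| ≤ |φ (toCons (F^[i] x))| + |φ (toCons η)| :=
          abs_sub _ _
      _ ≤ 2*M+1 := by linarith
  · intro ε hε
    have hUopen : IsOpen[consTop X] (φ ⁻¹' Metric.ball (φ (toCons η)) ε) :=
      (Metric.isOpen_ball).preimage hφ
    obtain ⟨V, hVopen, hηV, hVsub⟩ := exists_zariski_open (α := X) hUopen hη (by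
      show φ (toCons η) ∈ Metric.ball (φ (toCons η)) ε
      rw [Metric.mem_ball, dist_self]
      exact hε)
    refine ⟨fun i => F^[i] x ∈ (Vᶜ : Set X), fun i hi => ?_, ?_⟩
    · have hiV : F^[i] x ∈ V := not_not.mp hi
      have h3 : φ (toCons (F^[i] x)) ∈ Metric.ball _ ε := hVsub hiV
      rw [Metric.mem_ball] at h3
      rw [← Real.dist_eq]
      exact le_of_lt h3
    · exact visits_sparse (α := X) hfc hη hfη hx I hI hcard (Vᶜ) hVopen.isClosed_compl
        (by simp [hηV]) ε hε


end
end

section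
/- (Weak dynamical Mordell–Lang.) Let f : X → X be a dominant endomorphism of X (a dominant morphism of schemes over k) and x ∈ X a point whose forward orbit O_f(x) = {f^n(x) : n ≥ 0} is Zariski dense in X. Then for every proper Zariski-closed subset V of X, the set {n ∈ ℕ : f^n(x) ∈ V} has Banach density zero in ℕ. -/
open AlgebraicGeometry CategoryTheory MeasureTheory Filter Topology

noncomputable section

/-- count of elements of the interval `s` lying in `N` -/
private def cnt (N : Set ℕ) (s : Finset ℕ) : ℕ :=
  (@Finset.filter ℕ (· ∈ N) (Classical.decPred _) s).card

/-- `N` has "Banach density ≥ ε along some sequence of intervals of unbounded length". -/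
private def PosBD (ε : ℝ) (N : Set ℕ) : Prop :=
  ∀ m : ℕ, ∃ a b : ℕ, m ≤ (Finset.Icc a b).card ∧
    ε * (Finset.Icc a b).card ≤ cnt N (Finset.Icc a b)

private theorem PosBD.nonempty {ε : ℝ} {N : Set ℕ} (hε : 0 < ε) (h : PosBD ε N) :
    ∃ n, n ∈ N := by
  classical
  obtain ⟨a, b, hab, hcnt⟩ := h 1
  have hpos : (0 : ℝ) < ε * (Finset.Icc a b).card := by
    have : (1 : ℝ) ≤ (Finset.Icc a b).card := by exact_mod_cast hab
    nlinarith
  have : 0 < cnt N (Finset.Icc a b) := by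
    rcases Nat.eq_zero_or_pos (cnt N (Finset.Icc a b)) with h0 | h0
    · rw [h0] at hcnt; push_cast at hcnt; linarith
    · exact h0
  rw [cnt, Finset.card_pos] at this
  obtain ⟨n, hn⟩ := this
  rw [Finset.mem_filter] at hn
  exact ⟨n, hn.2⟩

private theorem posBD_pair {N : Set ℕ} {ε : ℝ} (hε : 0 < ε) (h : PosBD ε N) :
    ∃ d : ℕ, 0 < d ∧ ∃ ε' : ℝ, 0 < ε' ∧ PosBD ε' {n | n ∈ N ∧ n + d ∈ N} := by
  classical
  set D : ℕ := ⌈2 / ε⌉₊ + 1 with hD_def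
  have hD0 : 0 < D := Nat.succ_pos _
  have hDR : 2 / ε ≤ (D : ℝ) := by
    calc 2 / ε ≤ (⌈2 / ε⌉₊ : ℝ) := Nat.le_ceil _
    _ ≤ ((⌈2 / ε⌉₊ + 1 : ℕ) : ℝ) := by exact_mod_cast Nat.le_succ _
    _ = (D : ℝ) := by rw [hD_def]
  have hDRpos : (0 : ℝ) < D := by exact_mod_cast hD0
  set ε' : ℝ := ε / (4 * D) with hε'_def
  have hε' : 0 < ε' := by positivity
  -- it suffices to find one good gap d in [1, D]
  suffices hgood : ∃ d ∈ Finset.Icc 1 D, PosBD ε' {n | n ∈ N ∧ n + d ∈ N} by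
    obtain ⟨d, hd, hPos⟩ := hgood
    exact ⟨d, (Finset.mem_Icc.mp hd).1, ε', hε', hPos⟩
  by_contra hbad
  push_neg at hbad
  -- for each d, extract a bound beyond which density ε' fails
  have key : ∀ d ∈ Finset.Icc 1 D, ∃ m : ℕ, ∀ a b : ℕ, m ≤ (Finset.Icc a b).card →
      (cnt {n | n ∈ N ∧ n + d ∈ N} (Finset.Icc a b) : ℝ) < ε' * (Finset.Icc a b).card := by
    intro d hd
    have := hbad d hd
    rw [PosBD] at this
    push_neg at this
    obtain ⟨m, hm⟩ := this
    exact ⟨m, fun a b hab => hm a b hab⟩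
  choose md hmd using key
  set M : ℕ := (Finset.Icc 1 D).attach.sup (fun d => md d.1 d.2) with hM_def
  obtain ⟨a, b, hab, hcnt⟩ := h (max (M + 1) (⌈4 / ε⌉₊ + 1))
  set s : Finset ℕ := Finset.Icc a b with hs_def
  set L : ℕ := s.card with hL_def
  have hL1 : 1 ≤ L := le_trans (le_trans (Nat.le_add_left 1 M) (le_max_left _ _)) hab
  have hLM : M < L := lt_of_lt_of_le (Nat.lt_succ_self M) (le_trans (le_max_left _ _) hab)
  have hL4 : 4 / ε ≤ (L : ℝ) := by
    have h1 : ⌈4 / ε⌉₊ + 1 ≤ L := le_trans (le_max_right _ _) hab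
    have := Nat.le_ceil (4 / ε)
    have h2 : ((⌈4 / ε⌉₊ + 1 : ℕ) : ℝ) ≤ (L : ℝ) := by exact_mod_cast h1
    push_cast at h2
    linarith
  have hab' : a ≤ b := by
    by_contra hab'
    push_neg at hab'
    rw [hL_def, hs_def, Nat.card_Icc] at hL1
    omega
  have hLab : L = b + 1 - a := by rw [hL_def, hs_def, Nat.card_Icc]
  -- the set of elements of N in s
  set T : Finset ℕ := @Finset.filter ℕ (· ∈ N) (Classical.decPred _) s with hT_def
  set t : ℕ := T.card with ht_def
  have ht : ε * L ≤ (t : ℝ) := hcnt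
  -- block index
  set φ : ℕ → ℕ := fun n => (n - a) / D with hφ_def
  set T' : Finset ℕ := T.filter (fun n => ∃ n' ∈ T, n < n' ∧ φ n' = φ n) with hT'_def
  have hT'sub : T' ⊆ T := Finset.filter_subset _ _
  -- φ is injective on T \ T'
  have hinj : Set.InjOn φ ((T \ T' : Finset ℕ) : Set ℕ) := by
    intro n₁ h₁ n₂ h₂ heq
    by_contra hne
    rcases lt_or_gt_of_ne hne with hlt | hlt
    · rw [Finset.coe_sdiff] at h₁
      have h₁T : n₁ ∈ T := h₁.1
      have h₁T' : n₁ ∉ (T' : Set ℕ) := h₁.2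
      rw [Finset.coe_sdiff] at h₂
      exact h₁T' (by
        rw [Finset.mem_coe, hT'_def, Finset.mem_filter]
        exact ⟨h₁T, n₂, h₂.1, hlt, heq.symm⟩)
    · rw [Finset.coe_sdiff] at h₁ h₂
      exact h₂.2 (by
        rw [Finset.mem_coe, hT'_def, Finset.mem_filter]
        exact ⟨h₂.1, n₁, h₁.1, hlt, heq⟩)
  have himg : ∀ n ∈ T \ T', φ n ∈ Finset.range ((b - a) / D + 1) := by
    intro n hn
    have hns : n ∈ s := Finset.filter_subset _ _ (Finset.mem_sdiff.mp hn).1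
    rw [hs_def, Finset.mem_Icc] at hns
    rw [Finset.mem_range, Nat.lt_succ_iff, hφ_def]
    exact Nat.div_le_div_right (Nat.sub_le_sub_right hns.2 a)
  have card1 : (T \ T').card ≤ (b - a) / D + 1 := by
    have := Finset.card_le_card_of_injOn φ himg hinj
    simpa using this
  have card2 : t ≤ T'.card + ((b - a) / D + 1) := by
    have := Finset.card_sdiff_add_card_eq_card hT'sub
    omega
  -- T' is covered by the pair sets
  have hsub : T' ⊆ (Finset.Icc 1 D).biUnion
      (fun d => @Finset.filter ℕ (· ∈ {n | n ∈ N ∧ n + d ∈ N}) (Classical.decPred _) s) := by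
    intro n hn
    rw [hT'_def, Finset.mem_filter] at hn
    obtain ⟨hnT, n', hn'T, hlt, heq⟩ := hn
    have hns : n ∈ s := Finset.filter_subset _ _ hnT
    have hnN : n ∈ N := (Finset.mem_filter.mp hnT).2
    have hn'N : n' ∈ N := (Finset.mem_filter.mp hn'T).2
    have hn's : n' ∈ s := Finset.filter_subset _ _ hn'T
    rw [hs_def, Finset.mem_Icc] at hns hn's
    -- the gap is at most D
    have hgap : n' - n ≤ D := by
      by_contra hD
      push_neg at hD
      have h1 : (n - a) + D ≤ n' - a := by omega
      have h2 : ((n - a) + D) / D ≤ (n' - a) / D := Nat.div_le_div_right h1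
      rw [Nat.add_div_right _ hD0] at h2
      rw [hφ_def] at heq
      simp only at heq
      omega
    refine Finset.mem_biUnion.mpr ⟨n' - n, Finset.mem_Icc.mpr ⟨by omega, hgap⟩,
      (@Finset.mem_filter ℕ (· ∈ {m | m ∈ N ∧ m + (n' - n) ∈ N}) (Classical.decPred _) s n).mpr
        ⟨by rw [hs_def, Finset.mem_Icc]; omega, ?_⟩⟩
    show n ∈ N ∧ n + (n' - n) ∈ N
    have hnn : n + (n' - n) = n' := by omega
    exact ⟨hnN, by rw [hnn]; exact hn'N⟩
  have card3 : T'.card ≤ ∑ d ∈ Finset.Icc 1 D, cnt {n | n ∈ N ∧ n + d ∈ N} s := by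
    calc T'.card ≤ _ := Finset.card_le_card hsub
    _ ≤ _ := Finset.card_biUnion_le
  -- pigeonhole
  have hpig : ∃ d ∈ Finset.Icc 1 D, T'.card ≤ D * cnt {n | n ∈ N ∧ n + d ∈ N} s := by
    apply Finset.exists_le_of_sum_le ⟨1, Finset.mem_Icc.mpr ⟨le_refl 1, hD0⟩⟩
    calc ∑ _d ∈ Finset.Icc 1 D, T'.card = D * T'.card := by
          rw [Finset.sum_const, Nat.card_Icc]; simp [Nat.mul_comm]
    _ ≤ D * ∑ d ∈ Finset.Icc 1 D, cnt {n | n ∈ N ∧ n + d ∈ N} s := by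
          exact Nat.mul_le_mul_left D card3
    _ = ∑ d ∈ Finset.Icc 1 D, D * cnt {n | n ∈ N ∧ n + d ∈ N} s := Finset.mul_sum _ _ _
  obtain ⟨d, hd, hDc⟩ := hpig
  -- numeric contradiction
  clear_value D ε' M
  have hmdM : md d hd ≤ M := by
    rw [hM_def]
    exact Finset.le_sup (f := fun d => md d.1 d.2) (Finset.mem_attach _ ⟨d, hd⟩)
  have hmd' := hmd d hd a b (by rw [← hs_def, ← hL_def]; omega)
  rw [← hs_def, ← hL_def] at hmd'
  set c : ℕ := cnt {n | n ∈ N ∧ n + d ∈ N} s with hc_def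
  clear_value s L T t φ T' c
  have h1 : (t : ℝ) ≤ (T'.card : ℝ) + (((b - a) / D + 1 : ℕ) : ℝ) := by exact_mod_cast card2
  have h2 : (((b - a) / D + 1 : ℕ) : ℝ) ≤ ((b - a : ℕ) : ℝ) / D + 1 := by
    have h := Nat.cast_div_le (m := b - a) (n := D) (α := ℝ)
    rw [Nat.cast_add, Nat.cast_one]
    linarith
  have hba : ((b - a : ℕ) : ℝ) ≤ (L : ℝ) := by
    have : (b - a : ℕ) ≤ L := by omega
    exact_mod_cast this
  have h4 : (2 : ℝ) ≤ ε * D := by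
    rw [div_le_iff₀ hε] at hDR
    linarith [hDR]
  have h5 : (4 : ℝ) ≤ ε * L := by
    rw [div_le_iff₀ hε] at hL4
    linarith [hL4]
  have h6 : (T'.card : ℝ) ≤ (D : ℝ) * (c : ℝ) := by exact_mod_cast hDc
  have h7 : ((b - a : ℕ) : ℝ) / D ≤ ε * L / 2 := by
    rw [div_le_iff₀ hDRpos]
    have hL0 : (0 : ℝ) ≤ (L : ℝ) := Nat.cast_nonneg _
    nlinarith [mul_nonneg hL0 (by linarith : (0:ℝ) ≤ ε * D - 2), hba]
  have h8 : ε * L / 4 ≤ (T'.card : ℝ) := by linarith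
  have h9 : ε' * L ≤ (c : ℝ) := by
    rw [hε'_def, div_mul_eq_mul_div, div_le_iff₀ (by linarith : (0:ℝ) < 4 * D)]
    linarith [h8, h6]
  linarith [hmd', h9]


variable {T : Type*} [TopologicalSpace T]

private theorem irred_union [IrreducibleSpace T] (s : Finset ℕ) (g : ℕ → Set T)
    (hg : ∀ i, IsClosed (g i)) (hcov : Set.univ ⊆ ⋃ i ∈ s, g i) :
    ∃ i ∈ s, g i = Set.univ := by
  classical
  induction s using Finset.induction_on with
  | empty =>
    obtain ⟨y⟩ := (inferInstance : Nonempty T)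
    simpa using hcov (Set.mem_univ y)
  | @insert a s ha ih =>
    rw [Finset.set_biUnion_insert] at hcov
    rcases isPreirreducible_iff_isClosed_union_isClosed.mp
        (PreirreducibleSpace.isPreirreducible_univ (X := T)) (g a) (⋃ i ∈ s, g i) (hg a)
        (Set.Finite.isClosed_biUnion s.finite_toSet (fun i _ => hg i)) hcov with hc | hc
    · exact ⟨a, Finset.mem_insert_self a s, Set.eq_univ_of_univ_subset hc⟩
    · obtain ⟨i, hi, hgi⟩ := ih hc
      exact ⟨i, Finset.mem_insert_of_mem hi, hgi⟩

private theorem dense_image_of_denseRange {f : T → T} (hfc : Continuous f)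
    (hfd : DenseRange f) {A : Set T} (hA : Dense A) : Dense (f '' A) := hfd.dense_image hfc hA

private theorem denseRange_iterate {f : T → T} (hfc : Continuous f) (hfd : DenseRange f)
    (n : ℕ) : DenseRange f^[n] := by
  induction n with
  | zero => simpa using denseRange_id
  | succ n ih =>
    rw [Function.iterate_succ]
    exact ih.comp hfd (hfc.iterate n)

private theorem weakDML [TopologicalSpace.NoetherianSpace T] [IrreducibleSpace T]
    (f : T → T) (hfc : Continuous f) (hfd : DenseRange f)
    (x : T) (hx : Dense (Set.range fun n : ℕ => f^[n] x))
    (V : Set T) (hV : IsClosed V) (hVproper : V ≠ Set.univ)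
    (δ : ℝ) (hδ : 0 < δ) (H : PosBD δ {n | f^[n] x ∈ V}) : False := by
  classical
  set S : Set ℕ := {n | f^[n] x ∈ V} with hS_def
  set NN : Finset ℕ → Set ℕ := fun F => {n | ∀ e ∈ F, n + e ∈ S} with hNN_def
  set A : Finset ℕ → Set T := fun F => (fun n => f^[n] x) '' NN F with hA_def
  set Good : Finset ℕ → Prop := fun F => 0 ∈ F ∧ ∃ ε : ℝ, 0 < ε ∧ PosBD ε (NN F) with hGood_def
  set 𝒞 : Set (TopologicalSpace.Closeds T) :=
    {C | ∃ F, Good F ∧ (C : Set T) = closure (A F)} with h𝒞_def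
  -- `{0}` gives a member of the family
  have hNN0 : NN {0} = S := by
    ext n
    simp [hNN_def]
  have h𝒞ne : 𝒞.Nonempty := by
    refine ⟨⟨closure (A {0}), isClosed_closure⟩, {0}, ⟨Finset.mem_singleton_self 0, δ, hδ, ?_⟩, rfl⟩
    rw [hNN0]; exact H
  -- minimal element
  obtain ⟨C, hC𝒞, hCmin⟩ :=
    (wellFounded_lt (α := TopologicalSpace.Closeds T)).has_min 𝒞 h𝒞ne
  obtain ⟨F₀, hGood₀, hCY⟩ := hC𝒞
  set Y : Set T := closure (A F₀) with hY_def
  obtain ⟨h0F₀, ε, hε, hPos₀⟩ := hGood₀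
  -- find a good gap
  obtain ⟨d, hd, ε', hε', hPos'⟩ := posBD_pair hε hPos₀
  set G : Finset ℕ := F₀ ∪ F₀.image (· + d) with hG_def
  have hNNG : NN G = {n | n ∈ NN F₀ ∧ n + d ∈ NN F₀} := by
    ext n
    simp only [hNN_def, hG_def, Set.mem_setOf_eq, Finset.mem_union, Finset.mem_image]
    constructor
    · intro h
      refine ⟨fun e he => h e (Or.inl he), fun e he => ?_⟩
      have := h (e + d) (Or.inr ⟨e, he, rfl⟩)
      rwa [show n + (e + d) = n + d + e by ring] at this
    · rintro ⟨h1, h2⟩ e he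
      rcases he with he | ⟨e', he', rfl⟩
      · exact h1 e he
      · rw [show n + (e' + d) = n + d + e' by ring]
        exact h2 e' he'
  have hGoodG : Good G := by
    refine ⟨Finset.mem_union_left _ h0F₀, ε', hε', ?_⟩
    rw [hNNG]; exact hPos'
  have hNNGsub : NN G ⊆ NN F₀ := by rw [hNNG]; exact fun n hn => hn.1
  -- by minimality, closure (A G) = Y
  have hsubY : closure (A G) ⊆ Y := by
    rw [hY_def]
    exact closure_mono (Set.image_mono hNNGsub)
  have hYG : closure (A G) = Y := by
    have hmem : (⟨closure (A G), isClosed_closure⟩ : TopologicalSpace.Closeds T) ∈ 𝒞 :=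
      ⟨G, hGoodG, rfl⟩
    have hle : (⟨closure (A G), isClosed_closure⟩ : TopologicalSpace.Closeds T) ≤ C := by
      rw [← SetLike.coe_subset_coe, hCY]
      exact hsubY
    have hnlt := hCmin _ hmem
    have heq : (⟨closure (A G), isClosed_closure⟩ : TopologicalSpace.Closeds T) = C := by
      by_contra hne
      exact hnlt (lt_of_le_of_ne hle hne)
    calc closure (A G)
        = ((⟨closure (A G), isClosed_closure⟩ : TopologicalSpace.Closeds T) : Set T) := rfl
    _ = (C : Set T) := by rw [heq]
    _ = Y := hCY
  -- Y is mapped into itself by f^[d]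
  have hfdY : f^[d] '' Y ⊆ Y := by
    calc f^[d] '' Y = f^[d] '' closure (A G) := by rw [hYG]
    _ ⊆ closure (f^[d] '' A G) :=
          image_closure_subset_closure_image (hfc.iterate d)
    _ ⊆ closure (A F₀) := by
          apply closure_mono
          rintro y ⟨z, ⟨n, hn, rfl⟩, rfl⟩
          refine ⟨d + n, ?_, Function.iterate_add_apply f d n x⟩
          intro e he
          have h2 : n + d ∈ NN F₀ := ((Set.ext_iff.mp hNNG n).mp hn).2
          have h3 := h2 e he
          rwa [show d + n + e = n + d + e by ring]
    _ ⊆ Y := hY_def.superset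
  -- Y is contained in V
  have hYV : Y ⊆ V := by
    rw [hY_def]
    apply closure_minimal ?_ hV
    rintro y ⟨n, hn, rfl⟩
    have h0 := hn 0 h0F₀
    rw [add_zero] at h0
    exact h0
  -- Y contains some orbit point
  obtain ⟨n₀, hn₀⟩ := PosBD.nonempty hε hPos₀
  -- all points f^[n₀ + k·d] x lie in Y
  have hk : ∀ k : ℕ, f^[n₀ + k * d] x ∈ Y := by
    intro k
    induction k with
    | zero =>
      rw [Nat.zero_mul, Nat.add_zero]
      exact subset_closure ⟨n₀, hn₀, rfl⟩
    | succ k ih =>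
      have h1 : n₀ + (k + 1) * d = d + (n₀ + k * d) := by ring
      rw [h1, Function.iterate_add_apply]
      exact hfdY ⟨f^[n₀ + k * d] x, ih, rfl⟩
  -- dense tails
  have htail : ∀ m : ℕ, Dense (Set.range fun j => f^[m + j] x) := by
    intro m
    induction m with
    | zero => simpa using hx
    | succ m ih =>
      have hEq : (Set.range fun j => f^[m + 1 + j] x) = f '' Set.range (fun j => f^[m + j] x) := by
        ext y
        constructor
        · rintro ⟨j, rfl⟩
          refine ⟨f^[m + j] x, ⟨j, rfl⟩, ?_⟩
          show f (f^[m + j] x) = f^[m + 1 + j] x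
          rw [show m + 1 + j = (m + j) + 1 by omega, Function.iterate_succ_apply']
        · rintro ⟨z, ⟨j, rfl⟩, rfl⟩
          refine ⟨j, ?_⟩
          show f^[m + 1 + j] x = f (f^[m + j] x)
          rw [show m + 1 + j = (m + j) + 1 by omega, Function.iterate_succ_apply']
      rw [hEq]
      exact hfd.dense_image hfc ih
  -- split the tail at n₀ into residue classes mod d
  set g : ℕ → Set T := fun r => closure (Set.range fun k => f^[n₀ + r + k * d] x) with hg_def
  have hcov : Set.univ ⊆ ⋃ r ∈ Finset.range d, g r := by
    have hclosed : IsClosed (⋃ r ∈ Finset.range d, g r) :=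
      Set.Finite.isClosed_biUnion (Finset.range d).finite_toSet (fun i _ => isClosed_closure)
    have hsub : (Set.range fun j => f^[n₀ + j] x) ⊆ ⋃ r ∈ Finset.range d, g r := by
      rintro y ⟨j, rfl⟩
      refine Set.mem_biUnion (Finset.mem_coe.mpr (Finset.mem_range.mpr (Nat.mod_lt j hd))) ?_
      apply subset_closure
      refine ⟨j / d, ?_⟩
      show f^[n₀ + j % d + j / d * d] x = f^[n₀ + j] x
      rw [Nat.add_assoc, Nat.mod_add_div']
    calc Set.univ = closure (Set.range fun j => f^[n₀ + j] x) := ((htail n₀).closure_eq).symm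
    _ ⊆ ⋃ r ∈ Finset.range d, g r := closure_minimal hsub hclosed
  obtain ⟨r, hr, hgr⟩ := irred_union (Finset.range d) g (fun i => isClosed_closure) hcov
  rw [Finset.mem_range] at hr
  -- the image of the dense class under f^[d - r] is dense and contained in Y
  have hdense : Dense (Set.range fun k => f^[n₀ + r + k * d] x) := by
    rw [dense_iff_closure_eq]
    exact hgr
  have himg : f^[d - r] '' (Set.range fun k => f^[n₀ + r + k * d] x) ⊆ Y := by
    rintro y ⟨z, ⟨k, rfl⟩, rfl⟩
    have h1 : f^[d - r] (f^[n₀ + r + k * d] x) = f^[(d - r) + (n₀ + r + k * d)] x :=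
      (Function.iterate_add_apply f (d - r) (n₀ + r + k * d) x).symm
    
    rw [h1, show (d - r) + (n₀ + r + k * d) = n₀ + (k + 1) * d by
      have hrd : r ≤ d := Nat.le_of_lt hr
      have h3 : (k + 1) * d = k * d + d := by ring
      rw [h3]
      omega]
    exact hk (k + 1)
  have hdense2 : Dense (f^[d - r] '' (Set.range fun k => f^[n₀ + r + k * d] x)) :=
    (denseRange_iterate hfc hfd (d - r)).dense_image (hfc.iterate (d - r)) hdense
  have hYuniv : Y = Set.univ := by
    apply Set.eq_univ_of_univ_subset
    calc Set.univ = closure (f^[d - r] '' (Set.range fun k => f^[n₀ + r + k * d] x)) :=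
          (hdense2.closure_eq).symm
    _ ⊆ Y := closure_minimal himg isClosed_closure
  exact hVproper (Set.eq_univ_of_univ_subset (hYuniv ▸ hYV))


private theorem ncard_inter_eq_cnt (N : Set ℕ) (s : Finset ℕ) :
    ((s : Set ℕ) ∩ N).ncard = cnt N s := by
  have h : ((s : Set ℕ) ∩ N) = ((@Finset.filter ℕ (· ∈ N) (Classical.decPred _) s : Finset ℕ) : Set ℕ) := by
    ext n
    simp only [Set.mem_inter_iff, Finset.coe_filter, Set.mem_setOf_eq, Finset.mem_coe]
  rw [h, Set.ncard_coe_finset]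
  rfl


/-- Weak dynamical Mordell–Lang: if `f : X → X` is a dominant endomorphism of a
variety `X` over `k` and the forward orbit of `x` is Zariski dense, then for every proper
Zariski-closed subset `V ⊆ X` the return-time set `{n : f^n(x) ∈ V}` has Banach density zero:
for every sequence of intervals `I_n ⊆ ℕ` with `#I_n → ∞`,
`#({n : f^n(x) ∈ V} ∩ I_n)/#I_n → 0`. -/
theorem stmt5
    -- `X` is a variety over the algebraically closed field `k`:
    (k : Type) [Field k] [IsAlgClosed k] (X : Scheme) [IsIntegral X]
    (p : X ⟶ Spec (CommRingCat.of k)) [IsSeparated p] [LocallyOfFiniteType p] [QuasiCompact p]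
    -- `f` is a dominant endomorphism of `X` over `k`:
    (f : X ⟶ X) (hf : f ≫ p = p) [IsDominant f]
    -- `x` has Zariski dense forward orbit:
    (x : X) (hx : Dense (Set.range fun n : ℕ => (fun y : X => f.base y)^[n] x))
    -- `V` is a proper Zariski-closed subset of `X`:
    (V : Set X) (hV : IsClosed V) (hVproper : V ≠ Set.univ) :
    ∀ I : ℕ → Finset ℕ, (∀ n, ∃ a b : ℕ, I n = Finset.Icc a b) →
      Tendsto (fun n => (I n).card) atTop atTop →
      Tendsto
        (fun n => ((((I n : Set ℕ)) ∩ {m : ℕ | (fun y : X => f.base y)^[m] x ∈ V}).ncard : ℝ)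
          / (I n).card)
        atTop (nhds 0) := by
  -- Noetherianity of `X`
  haveI : IsNoetherianRing (CommRingCat.of k) := inferInstanceAs (IsNoetherianRing k)
  haveI hLN : IsLocallyNoetherian X := by
    apply isLocallyNoetherian_of_affine_cover (S := fun U : X.affineOpens => U)
      (iSup_affineOpens_eq_top X)
    intro U
    have hft := LocallyOfFiniteType.finiteType_of_affine_subset (f := p)
      (isAffineOpen_top _) U.2 le_top
    have hNoeth : IsNoetherianRing Γ(Spec (CommRingCat.of k), ⊤) :=
      IsLocallyNoetherian.component_noetherian ⟨⊤, isAffineOpen_top _⟩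
    letI := (p.appLE ⊤ U.1 le_top).hom.toAlgebra
    haveI : Algebra.FiniteType Γ(Spec (CommRingCat.of k), ⊤) Γ(X, U.1) := hft
    exact Algebra.FiniteType.isNoetherianRing Γ(Spec (CommRingCat.of k), ⊤) Γ(X, U.1)
  haveI hCS : CompactSpace X := QuasiCompact.compactSpace_of_compactSpace p
  haveI : IsNoetherian X := ⟨⟩
  haveI : TopologicalSpace.NoetherianSpace X := inferInstance
  intro I hIcc hcard
  by_contra hT
  rw [Metric.tendsto_atTop] at hT
  push_neg at hT
  obtain ⟨ε, hε, hfar⟩ := hT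
  -- extract PosBD
  have hPos : PosBD ε {m : ℕ | (fun y : X => f.base y)^[m] x ∈ V} := by
    intro m
    obtain ⟨N, hN⟩ := eventually_atTop.mp ((tendsto_atTop.mp hcard) m)
    obtain ⟨n, hnN, hdist⟩ := hfar N
    obtain ⟨a, b, hab⟩ := hIcc n
    rw [Real.dist_eq, sub_zero] at hdist
    have hcard_pos : 0 < ((I n).card : ℝ) := by
      by_contra hle
      push_neg at hle
      have h0 : ((I n).card : ℝ) = 0 := le_antisymm hle (Nat.cast_nonneg _)
      rw [h0, div_zero, abs_zero] at hdist
      linarith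
    have hnonneg : (0:ℝ) ≤
        (((I n : Set ℕ) ∩ {m : ℕ | (fun y : X => f.base y)^[m] x ∈ V}).ncard : ℝ)
          / (I n).card := by positivity
    rw [abs_of_nonneg hnonneg, le_div_iff₀ hcard_pos] at hdist
    refine ⟨a, b, by rw [← hab]; exact hN n hnN, ?_⟩
    rw [← hab, ← ncard_inter_eq_cnt]
    exact hdist
  exact weakDML (fun y : X => f.base y) f.continuous f.denseRange x hx V hV hVproper
    ε hε hPos

end
end

section
/- (Weak dynamical Mordell–Lang for coherent backward orbits.) Let f : X → X be a dominant endomorphism of X (a dominant morphism of schemes over k) and let x_n ∈ X (n ≥ 0) be a sequence of points such that f(x_{n+1}) = x_n for all n ≥ 0 and the set {x_n : n ≥ 0} is Zariski dense in X. Then for every proper Zariski-closed subset V of X, the set {n ∈ ℕ : x_n ∈ V} has Banach density zero in ℕ. -/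
open AlgebraicGeometry CategoryTheory MeasureTheory Filter Topology TopologicalSpace

noncomputable section

/-- Purely topological version of the weak dynamical Mordell–Lang theorem for coherent
backward orbits, on an irreducible Noetherian topological space. -/
theorem aux_wdml {α : Type*} [TopologicalSpace α] [NoetherianSpace α] [IrreducibleSpace α]
    (g : α → α) (hg : Continuous g) (hgd : DenseRange g)
    (x : ℕ → α) (hback : ∀ n : ℕ, g (x (n + 1)) = x n)
    (hx : Dense (Set.range x))
    (V : Set α) (hV : IsClosed V) (hVproper : V ≠ Set.univ)
    (I : ℕ → Finset ℕ) (hI : ∀ n, ∃ a b : ℕ, I n = Finset.Icc a b)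
    (hIcard : Tendsto (fun n => (I n).card) atTop atTop) :
    Tendsto (fun n => ((((I n : Set ℕ)) ∩ {m : ℕ | x m ∈ V}).ncard : ℝ) / (I n).card)
      atTop (nhds 0) := by
  classical
  -- iterates of the backward orbit
  have hgiter : ∀ t s : ℕ, t ≤ s → g^[t] (x s) = x (s - t) := by
    intro t
    induction t with
    | zero => simp
    | succ t ih =>
      intro s hs
      have h1 : g (x s) = x (s - 1) := by
        have := hback (s - 1)
        rwa [Nat.sub_add_cancel (by omega)] at this
      rw [Function.iterate_succ_apply, h1, ih (s - 1) (by omega)]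
      congr 1
      omega
  have hdivle : ∀ (a b : ℕ) (c : ℕ), a ≤ b → (a:ℝ)/(c:ℝ) ≤ (b:ℝ)/(c:ℝ) := by
    intro a b c h
    rcases Nat.eq_zero_or_pos c with rfl | hc
    · simp
    · have hc' : (0:ℝ) < (c:ℝ) := by exact_mod_cast hc
      exact (div_le_div_iff_of_pos_right hc').mpr (by exact_mod_cast h)
  set S : Set α → Set ℕ := fun C => {m | x m ∈ C} with hS
  set d : Set α → ℕ → ℝ :=
    fun C n => ((((I n : Set ℕ) ∩ S C).ncard : ℝ) / ((I n).card : ℝ)) with hd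
  have hfin : ∀ (n : ℕ) (C : Set α), ((I n : Set ℕ) ∩ S C).Finite :=
    fun n C => (I n).finite_toSet.inter_of_left _
  have hmem : ∀ (n : ℕ) (C : Set α) (m : ℕ), m ∈ (I n : Set ℕ) ∩ S C ↔ m ∈ I n ∧ x m ∈ C := by
    intro n C m
    simp [hS]
  have hcard_le : ∀ (n : ℕ) (C : Set α), ((I n : Set ℕ) ∩ S C).ncard ≤ (I n).card := by
    intro n C
    rw [← Set.ncard_coe_finset (I n)]
    exact Set.ncard_le_ncard Set.inter_subset_left (I n).finite_toSet
  have hd_nonneg : ∀ C n, 0 ≤ d C n := fun C n => by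
    apply div_nonneg <;> positivity
  have hd_le_one : ∀ C n, d C n ≤ 1 := fun C n => by
    rcases Nat.eq_zero_or_pos ((I n).card) with h0 | h0
    · simp [hd, h0]
    · apply div_le_one_of_le₀
      · exact_mod_cast hcard_le n C
      · positivity
  have hd_mono : ∀ (C D : Set α), C ⊆ D → ∀ n, d C n ≤ d D n := by
    intro C D hCD n
    apply hdivle
    apply Set.ncard_le_ncard ?_ (hfin n D)
    intro m hm
    rw [hmem] at hm ⊢
    exact ⟨hm.1, hCD hm.2⟩
  -- the goal function is `d V`
  have hgoal : (fun n => ((((I n : Set ℕ)) ∩ {m : ℕ | x m ∈ V}).ncard : ℝ) / (I n).card) = d V :=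
    rfl
  rw [hgoal]
  by_contra hcon
  -- find `ε > 0` with `d V n ≥ ε` frequently
  have hfreq : ∃ ε > (0:ℝ), ∃ᶠ n in atTop, ε ≤ d V n := by
    by_contra h
    push_neg at h
    apply hcon
    refine tendsto_order.2 ⟨fun c hc => ?_, fun c hc => ?_⟩
    · exact Eventually.of_forall fun n => lt_of_lt_of_le hc (hd_nonneg V n)
    · have h2 := h c hc
      filter_upwards [h2] with n hn
      exact hn
  obtain ⟨ε, hε, hfr⟩ := hfreq
  -- ultrafilter refining
  haveI hL : ((atTop : Filter ℕ) ⊓ 𝓟 {n | ε ≤ d V n}).NeBot := frequently_iff_neBot.mp hfr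
  set U := Ultrafilter.of ((atTop : Filter ℕ) ⊓ 𝓟 {n | ε ≤ d V n}) with hU
  have hU1 : (U : Filter ℕ) ≤ atTop := (Ultrafilter.of_le _).trans inf_le_left
  have hU2 : ∀ᶠ n in (U : Filter ℕ), ε ≤ d V n := by
    have h3 : (U : Filter ℕ) ≤ 𝓟 {n | ε ≤ d V n} := (Ultrafilter.of_le _).trans inf_le_right
    exact h3 (mem_principal_self _)
  haveI : (U : Filter ℕ).NeBot := U.neBot
  -- the limiting density
  have hex : ∀ C : Set α, ∃ L ∈ Set.Icc (0:ℝ) 1, Tendsto (d C) (U : Filter ℕ) (𝓝 L) := by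
    intro C
    obtain ⟨L, hL1, hL2⟩ := isCompact_Icc.ultrafilter_le_nhds (U.map (d C)) (by
      rw [Ultrafilter.coe_map, le_principal_iff, Filter.mem_map]
      exact Filter.univ_mem' fun n => ⟨hd_nonneg C n, hd_le_one C n⟩)
    rw [Ultrafilter.coe_map] at hL2
    exact ⟨L, hL1, hL2⟩
  choose ν hν1 hν2 using hex
  have hν_nonneg : ∀ C, 0 ≤ ν C := fun C => (hν1 C).1
  have hν_le_one : ∀ C, ν C ≤ 1 := fun C => (hν1 C).2
  have hνV : ε ≤ ν V := ge_of_tendsto (hν2 V) hU2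
  have hν_mono : ∀ (C D : Set α), C ⊆ D → ν C ≤ ν D := fun C D hCD =>
    le_of_tendsto_of_tendsto' (hν2 C) (hν2 D) (hd_mono C D hCD)
  have hν_empty : ν (∅ : Set α) = 0 := by
    refine tendsto_nhds_unique (hν2 ∅) ?_
    have h4 : d (∅ : Set α) = fun _ => (0:ℝ) := by
      funext n
      have : (I n : Set ℕ) ∩ S ∅ = ∅ := by
        ext m; simp [hS]
      simp [hd, this]
    rw [h4]
    exact tendsto_const_nhds
  -- modularity
  have hν_modular : ∀ C D : Set α, ν (C ∪ D) + ν (C ∩ D) = ν C + ν D := by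
    intro C D
    have hdeq : ∀ n, d (C ∪ D) n + d (C ∩ D) n = d C n + d D n := by
      intro n
      have hsetU : ((I n : Set ℕ) ∩ S C) ∪ ((I n : Set ℕ) ∩ S D)
          = (I n : Set ℕ) ∩ S (C ∪ D) := by
        ext m
        simp only [Set.mem_union, hmem, hS, Set.mem_setOf_eq, Set.mem_inter_iff,
          Finset.mem_coe]
        tauto
      have hsetI : ((I n : Set ℕ) ∩ S C) ∩ ((I n : Set ℕ) ∩ S D)
          = (I n : Set ℕ) ∩ S (C ∩ D) := by
        ext m
        simp only [Set.mem_inter_iff, hS, Set.mem_setOf_eq, Finset.mem_coe]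
        tauto
      have key := Set.ncard_union_add_ncard_inter ((I n : Set ℕ) ∩ S C) ((I n : Set ℕ) ∩ S D)
        (hfin n C) (hfin n D)
      rw [hsetU, hsetI] at key
      simp only [hd]
      rw [← add_div, ← add_div]
      congr 1
      exact_mod_cast key
    refine tendsto_nhds_unique ((hν2 (C ∪ D)).add (hν2 (C ∩ D))) ?_
    exact ((hν2 C).add (hν2 D)).congr fun n => (hdeq n).symm
  have hν_subadd : ∀ C D : Set α, ν (C ∪ D) ≤ ν C + ν D := by
    intro C D
    have h1 := hν_modular C D
    have h2 := hν_nonneg (C ∩ D)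
    linarith
  -- invariance
  have hν_inv : ∀ C : Set α, ν (g ⁻¹' C) = ν C := by
    intro C
    have hcnt : ∀ n, (((I n : Set ℕ) ∩ S C).ncard : ℝ) ≤
        (((I n : Set ℕ) ∩ S (g ⁻¹' C)).ncard : ℝ) + 1 ∧
        (((I n : Set ℕ) ∩ S (g ⁻¹' C)).ncard : ℝ) ≤
        (((I n : Set ℕ) ∩ S C).ncard : ℝ) + 1 := by
      intro n
      obtain ⟨a, b, hab⟩ := hI n
      constructor
      · have h5 : ((I n : Set ℕ) ∩ S C).ncard ≤
            (insert (b+1) ((I n : Set ℕ) ∩ S (g ⁻¹' C))).ncard := by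
          apply Set.ncard_le_ncard_of_injOn (fun m => m + 1)
          · intro m hm
            show m + 1 ∈ insert (b+1) ((I n : Set ℕ) ∩ S (g ⁻¹' C))
            rw [hmem, hab, Finset.mem_Icc] at hm
            obtain ⟨⟨ham, hmb⟩, hmC⟩ := hm
            have hpre : x (m+1) ∈ g ⁻¹' C := by
              simp only [Set.mem_preimage, hback m]
              exact hmC
            rcases eq_or_ne m b with rfl | hne
            · exact Set.mem_insert _ _
            · apply Set.mem_insert_of_mem
              rw [hmem, hab, Finset.mem_Icc]
              exact ⟨⟨by omega, by omega⟩, hpre⟩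
          · intro m _ m' _ h
            have : m + 1 = m' + 1 := h
            omega
        calc (((I n : Set ℕ) ∩ S C).ncard : ℝ)
            ≤ ((insert (b+1) ((I n : Set ℕ) ∩ S (g ⁻¹' C))).ncard : ℝ) := by exact_mod_cast h5
          _ ≤ (((I n : Set ℕ) ∩ S (g ⁻¹' C)).ncard : ℝ) + 1 := by
              exact_mod_cast Set.ncard_insert_le _ _
      · have h5 : ((I n : Set ℕ) ∩ S (g ⁻¹' C)).ncard ≤
            (insert (b+1) ((I n : Set ℕ) ∩ S C)).ncard := by
          apply Set.ncard_le_ncard_of_injOn (fun m => if m = a then b + 1 else m - 1)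
          · intro m hm
            show (if m = a then b + 1 else m - 1) ∈ insert (b+1) ((I n : Set ℕ) ∩ S C)
            rw [hmem, hab, Finset.mem_Icc] at hm
            obtain ⟨⟨ham, hmb⟩, hmC⟩ := hm
            rcases eq_or_ne m a with rfl | hne
            · simp
            · have hm1 : 1 ≤ m := by omega
              have hxm : x (m - 1) ∈ C := by
                have h7 := hback (m - 1)
                rw [Nat.sub_add_cancel hm1] at h7
                rw [← h7]
                exact hmC
              simp only [if_neg hne]
              apply Set.mem_insert_of_mem
              rw [hmem, hab, Finset.mem_Icc]
              exact ⟨⟨by omega, by omega⟩, hxm⟩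
          · intro m hm m' hm' h
            rw [hmem, hab, Finset.mem_Icc] at hm hm'
            obtain ⟨⟨ham, hmb⟩, -⟩ := hm
            obtain ⟨⟨ham', hmb'⟩, -⟩ := hm'
            have h' : (if m = a then b + 1 else m - 1) = (if m' = a then b + 1 else m' - 1) := h
            by_cases h1 : m = a <;> by_cases h2 : m' = a <;>
              simp only [h1, h2, if_true, if_neg, ite_true, ite_false] at h' <;> omega
        calc (((I n : Set ℕ) ∩ S (g ⁻¹' C)).ncard : ℝ)
            ≤ ((insert (b+1) ((I n : Set ℕ) ∩ S C)).ncard : ℝ) := by exact_mod_cast h5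
          _ ≤ (((I n : Set ℕ) ∩ S C).ncard : ℝ) + 1 := by
              exact_mod_cast Set.ncard_insert_le _ _
    have hdist : ∀ n, dist (d C n) (d (g ⁻¹' C) n) ≤ 1 / ((I n).card : ℝ) := by
      intro n
      rcases Nat.eq_zero_or_pos ((I n).card) with h0 | h0
      · simp [hd, h0, Real.dist_eq]
      · have hc : (0:ℝ) < ((I n).card : ℝ) := by exact_mod_cast h0
        simp only [hd]
        rw [Real.dist_eq, div_sub_div_same, abs_div, abs_of_nonneg hc.le]
        apply (div_le_div_iff_of_pos_right hc).mpr
        have h1 := (hcnt n).1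
        have h2 := (hcnt n).2
        rw [abs_le]
        constructor <;> nlinarith
    have hzero : Tendsto (fun n => dist (d C n) (d (g ⁻¹' C) n)) (U : Filter ℕ) (𝓝 0) := by
      have hb : Tendsto (fun n => 1 / ((I n).card : ℝ)) atTop (𝓝 0) :=
        tendsto_one_div_atTop_nhds_zero_nat.comp hIcard
      exact tendsto_of_tendsto_of_tendsto_of_le_of_le tendsto_const_nhds
        (hb.mono_left hU1) (fun n => dist_nonneg) hdist
    exact tendsto_nhds_unique (hν2 (g ⁻¹' C)) ((hν2 C).congr_dist hzero)
  have hν_inv_iter : ∀ (i : ℕ) (C : Set α), ν (g^[i] ⁻¹' C) = ν C := by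
    intro i
    induction i with
    | zero => intro C; simp
    | succ i ih =>
      intro C
      have h8 : g^[i+1] ⁻¹' C = g^[i] ⁻¹' (g ⁻¹' C) := by
        rw [Function.iterate_succ']
        rfl
      rw [h8, ih, hν_inv]
  -- positivity of ν implies unbounded return times
  have hν_unbdd : ∀ C : Set α, 0 < ν C → ∀ N : ℕ, ∃ m, N ≤ m ∧ x m ∈ C := by
    intro C hC N
    by_contra h
    push_neg at h
    have hsub : ∀ n, ((I n : Set ℕ) ∩ S C) ⊆ ((Finset.range N : Finset ℕ) : Set ℕ) := by
      intro n m hm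
      rw [hmem] at hm
      simp only [Finset.coe_range, Set.mem_Iio]
      by_contra hh
      exact h m (by omega) hm.2
    have hdle : ∀ n, d C n ≤ (N : ℝ) / ((I n).card : ℝ) := by
      intro n
      have h1 : ((I n : Set ℕ) ∩ S C).ncard ≤ N := by
        have := Set.ncard_le_ncard (hsub n) (Finset.finite_toSet _)
        rwa [Set.ncard_coe_finset, Finset.card_range] at this
      exact hdivle _ _ _ h1
    have hb : Tendsto (fun n => (N : ℝ) / ((I n).card : ℝ)) atTop (𝓝 0) :=
      (tendsto_const_div_atTop_nhds_zero_nat (N : ℝ)).comp hIcard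
    have hzero : Tendsto (d C) (U : Filter ℕ) (𝓝 0) :=
      tendsto_of_tendsto_of_tendsto_of_le_of_le tendsto_const_nhds
        (hb.mono_left hU1) (hd_nonneg C) hdle
    have := tendsto_nhds_unique (hν2 C) hzero
    exact absurd this (by linarith)
  -- finite subadditivity
  have hν_subadd_fin : ∀ (r : ℕ) (A : ℕ → Set α),
      ν (⋃ j ∈ Finset.range r, A j) ≤ ∑ j ∈ Finset.range r, ν (A j) := by
    intro r
    induction r with
    | zero => intro A; simp [hν_empty]
    | succ r ih =>
      intro A
      rw [Finset.range_add_one, Finset.set_biUnion_insert, Finset.sum_insert (by simp)]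
      calc ν (A r ∪ ⋃ j ∈ Finset.range r, A j)
          ≤ ν (A r) + ν (⋃ j ∈ Finset.range r, A j) := hν_subadd _ _
        _ ≤ ν (A r) + ∑ j ∈ Finset.range r, ν (A j) := by linarith [ih A]
  -- Bonferroni-type inequality
  have hbon : ∀ (r : ℕ) (A : ℕ → Set α),
      ∑ j ∈ Finset.range r, ν (A j) ≤ ν (⋃ j ∈ Finset.range r, A j)
        + ∑ j ∈ Finset.range r, ∑ i ∈ Finset.range j, ν (A i ∩ A j) := by
    intro r
    induction r with
    | zero => intro A; simp [hν_empty]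
    | succ r ih =>
      intro A
      have key : ν (⋃ j ∈ Finset.range r, A j) + ν (A r)
          ≤ ν (⋃ j ∈ Finset.range (r+1), A j) + ∑ i ∈ Finset.range r, ν (A i ∩ A r) := by
        have hmod := hν_modular (⋃ j ∈ Finset.range r, A j) (A r)
        have hint : (⋃ j ∈ Finset.range r, A j) ∩ A r = ⋃ j ∈ Finset.range r, (A j ∩ A r) := by
          ext z
          simp only [Set.mem_inter_iff, Set.mem_iUnion]
          tauto
        have hcup : (⋃ j ∈ Finset.range r, A j) ∪ A r = ⋃ j ∈ Finset.range (r+1), A j := by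
          rw [Finset.range_add_one, Finset.set_biUnion_insert]
          exact Set.union_comm _ _
        have hsub2 : ν ((⋃ j ∈ Finset.range r, A j) ∩ A r)
            ≤ ∑ i ∈ Finset.range r, ν (A i ∩ A r) := by
          rw [hint]
          exact hν_subadd_fin r _
        rw [hcup] at hmod
        linarith
      have ih' := ih A
      rw [Finset.range_add_one, Finset.sum_insert (by simp), Finset.sum_insert (by simp)]
      rw [← Finset.range_add_one]
      linarith
  -- a minimal closed subset of V with positive measure
  have hνVpos : 0 < ν V := lt_of_lt_of_le hε hνV
  obtain ⟨W, hWmem, hWmin⟩ := (wellFounded_lt (α := Closeds α)).has_min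
    {C : Closeds α | (C : Set α) ⊆ V ∧ 0 < ν (C : Set α)} ⟨⟨V, hV⟩, subset_rfl, hνVpos⟩
  obtain ⟨hWV, hWpos⟩ := hWmem
  have hWmin' : ∀ C : Set α, IsClosed C → C ⊆ (W : Set α) → 0 < ν C → C = (W : Set α) := by
    intro C hC hsub hpos
    by_contra hne
    refine hWmin ⟨C, hC⟩ ⟨hsub.trans hWV, hpos⟩ (lt_of_le_of_ne ?_ ?_)
    · exact hsub
    · intro heq
      exact hne (congrArg (fun s : Closeds α => (s : Set α)) heq)
  have hWun : ∀ N : ℕ, ∃ m, N ≤ m ∧ x m ∈ (W : Set α) := hν_unbdd _ hWpos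
  by_cases hT : ∃ j, 1 ≤ j ∧ ∀ y ∈ (W : Set α), g^[j] y ∈ (W : Set α)
  · -- case (i)
    obtain ⟨j, hj1, hjW⟩ := hT
    have hQ : closure (g^[j] '' (W : Set α)) = (W : Set α) := by
      apply hWmin'
      · exact isClosed_closure
      · apply closure_minimal ?_ W.isClosed
        rintro _ ⟨y, hy, rfl⟩
        exact hjW y hy
      · have h1 : (W : Set α) ⊆ g^[j] ⁻¹' (closure (g^[j] '' (W : Set α))) := by
          intro y hy
          exact subset_closure (Set.mem_image_of_mem _ hy)
        calc (0:ℝ) < ν (W : Set α) := hWpos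
          _ ≤ ν (g^[j] ⁻¹' (closure (g^[j] '' (W : Set α)))) := hν_mono _ _ h1
          _ = ν (closure (g^[j] '' (W : Set α))) := hν_inv_iter j _
    have hdown : ∀ m r, x m ∈ (W : Set α) → r * j ≤ m → x (m - r * j) ∈ (W : Set α) := by
      intro m r
      induction r with
      | zero => intro h _; simpa using h
      | succ r ih =>
        intro hm hrm
        have hrm' : r * j ≤ m := by
          have he : (r+1) * j = r * j + j := by ring
          omega
        have h1 : x (m - r * j) ∈ (W : Set α) := ih hm hrm'
        have h2 : j ≤ m - r * j := by
          have he : (r+1) * j = r * j + j := by ring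
          omega
        have h3 := hgiter j (m - r * j) h2
        have h4 : m - r * j - j = m - (r+1) * j := by
          have he : (r+1) * j = r * j + j := by ring
          omega
        rw [h4] at h3
        rw [← h3]
        exact hjW _ h1
    have hcover : ∀ m, ∃ i, i < j ∧ x m ∈ g^[i] '' (W : Set α) := by
      intro m
      obtain ⟨n, hnm, hnW⟩ := hWun m
      have hdm := Nat.div_add_mod (n - m) j
      set q := (n - m) / j with hq
      set i := (n - m) % j with hi
      have hij : i < j := Nat.mod_lt _ (by omega)
      have hdm' : q * j + i = n - m := by rw [Nat.mul_comm]; exact hdm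
      have hqj : q * j ≤ n := by omega
      have h1 : x (n - q * j) ∈ (W : Set α) := hdown n q hnW hqj
      have h2 : n - q * j = m + i := by omega
      rw [h2] at h1
      refine ⟨i, hij, ⟨x (m + i), h1, ?_⟩⟩
      rw [hgiter i (m + i) (by omega)]
      congr 1
      omega
    -- pass to the closure: univ is covered by finitely many closed sets
    set 𝒵 : Finset (Set α) := (Finset.range j).image (fun i => closure (g^[i] '' (W : Set α)))
      with h𝒵
    have hcov2 : (Set.univ : Set α) ⊆ ⋃₀ ↑𝒵 := by
      have hrange : Set.range x ⊆ ⋃₀ ↑𝒵 := by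
        rintro _ ⟨m, rfl⟩
        obtain ⟨i, hij, hmemx⟩ := hcover m
        refine Set.mem_sUnion.2 ⟨closure (g^[i] '' (W : Set α)), ?_, subset_closure hmemx⟩
        simp only [h𝒵, Finset.coe_image, Set.mem_image, Finset.mem_coe, Finset.mem_range]
        exact ⟨i, hij, rfl⟩
      have hclosed : IsClosed (⋃₀ (↑𝒵 : Set (Set α))) := by
        rw [Set.sUnion_eq_biUnion]
        apply Set.Finite.isClosed_biUnion (Finset.finite_toSet _)
        intro s hs
        simp only [h𝒵, Finset.coe_image, Set.mem_image, Finset.mem_coe, Finset.mem_range] at hs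
        obtain ⟨i, -, rfl⟩ := hs
        exact isClosed_closure
      calc (Set.univ : Set α) = closure (Set.range x) := hx.closure_eq.symm
        _ ⊆ ⋃₀ ↑𝒵 := closure_minimal hrange hclosed
    obtain ⟨Z, hZmem, hZ⟩ := (isIrreducible_iff_sUnion_isClosed.mp
      (IrreducibleSpace.isIrreducible_univ α)) 𝒵
      (by
        intro s hs
        simp only [h𝒵, Finset.mem_image, Finset.mem_range] at hs
        obtain ⟨i, -, rfl⟩ := hs
        exact isClosed_closure) hcov2
    simp only [h𝒵, Finset.mem_image, Finset.mem_range] at hZmem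
    obtain ⟨i, hij, rfl⟩ := hZmem
    have huniv : closure (g^[i] '' (W : Set α)) = Set.univ := Set.univ_subset_iff.mp hZ
    -- dense range of iterates
    have hdr : ∀ t, DenseRange (g^[t]) := by
      intro t
      induction t with
      | zero => simpa using denseRange_id
      | succ t ih =>
        rw [Function.iterate_succ']
        exact DenseRange.comp hgd ih hg
    have hui : (j - i) + i = j := by omega
    have hrange_sub : Set.range (g^[j - i]) ⊆ (W : Set α) := by
      rintro _ ⟨z, rfl⟩
      have hz : z ∈ closure (g^[i] '' (W : Set α)) := by rw [huniv]; trivial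
      have h1 : g^[j - i] z ∈ closure (g^[j - i] '' (g^[i] '' (W : Set α))) :=
        image_closure_subset_closure_image (hg.iterate (j - i)) ⟨z, hz, rfl⟩
      have h2 : g^[j - i] '' (g^[i] '' (W : Set α)) = g^[j] '' (W : Set α) := by
        rw [← Set.image_comp, ← Function.iterate_add, hui]
      rw [h2, hQ] at h1
      exact h1
    have huniv2 : (Set.univ : Set α) ⊆ (W : Set α) := by
      calc (Set.univ : Set α) = closure (Set.range (g^[j - i])) := ((hdr (j - i)).closure_eq).symm
        _ ⊆ (W : Set α) := closure_minimal hrange_sub W.isClosed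
    exact hVproper (Set.univ_subset_iff.mp (huniv2.trans hWV))
  · -- case (ii)
    push_neg at hT
    have hzero : ∀ j, 1 ≤ j → ν ((W : Set α) ∩ g^[j] ⁻¹' (W : Set α)) = 0 := by
      intro j hj
      by_contra hne
      have hpos : 0 < ν ((W : Set α) ∩ g^[j] ⁻¹' (W : Set α)) :=
        lt_of_le_of_ne (hν_nonneg _) (Ne.symm hne)
      have heq := hWmin' _ (W.isClosed.inter (W.isClosed.preimage (hg.iterate j)))
        Set.inter_subset_left hpos
      obtain ⟨y, hy, hny⟩ := hT j hj
      have hymem : y ∈ (W : Set α) ∩ g^[j] ⁻¹' (W : Set α) := by rw [heq]; exact hy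
      exact hny hymem.2
    obtain ⟨r, hr⟩ := exists_nat_gt (1 / ν (W : Set α))
    set A : ℕ → Set α := fun j => g^[j] ⁻¹' (W : Set α) with hA
    have hAν : ∀ j, ν (A j) = ν (W : Set α) := fun j => hν_inv_iter j _
    have hApair : ∀ i' j, i' < j → ν (A i' ∩ A j) = 0 := by
      intro i' j hij
      have h1 : A i' ∩ A j = g^[i'] ⁻¹' ((W : Set α) ∩ g^[j - i'] ⁻¹' (W : Set α)) := by
        simp only [hA]
        rw [Set.preimage_inter]
        congr 1
        rw [← Set.preimage_comp, ← Function.iterate_add]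
        have he : j - i' + i' = j := by omega
        rw [he]
      rw [h1, hν_inv_iter]
      exact hzero (j - i') (by omega)
    have hB := hbon r A
    have hsum1 : ∑ j ∈ Finset.range r, ν (A j) = r * ν (W : Set α) := by
      rw [Finset.sum_congr rfl (fun j _ => hAν j), Finset.sum_const, Finset.card_range,
        nsmul_eq_mul]
    have hsum2 : ∑ j ∈ Finset.range r, ∑ i ∈ Finset.range j, ν (A i ∩ A j) = 0 := by
      apply Finset.sum_eq_zero
      intro j _
      apply Finset.sum_eq_zero
      intro i hi
      exact hApair i j (Finset.mem_range.mp hi)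
    rw [hsum1, hsum2] at hB
    have h1 : (1:ℝ) < r * ν (W : Set α) := by
      rw [div_lt_iff₀ hWpos] at hr
      exact hr
    have h2 := hν_le_one (⋃ j ∈ Finset.range r, A j)
    linarith

/-- Weak dynamical Mordell–Lang for coherent backward orbits: let `f : X → X` be
a dominant endomorphism of a variety `X` over `k` and `x_n ∈ X` a sequence with
`f(x_{n+1}) = x_n` whose members form a Zariski dense set. Then for every proper Zariski-closed
subset `V ⊆ X` the set `{n : x_n ∈ V}` has Banach density zero. -/
theorem stmt6
    -- `X` is a variety over the algebraically closed field `k`: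
    (k : Type) [Field k] [IsAlgClosed k] (X : Scheme) [IsIntegral X]
    (p : X ⟶ Spec (CommRingCat.of k)) [IsSeparated p] [LocallyOfFiniteType p] [QuasiCompact p]
    -- `f` is a dominant endomorphism of `X` over `k`:
    (f : X ⟶ X) (hf : f ≫ p = p) [IsDominant f]
    -- a coherent backward orbit which is Zariski dense:
    (x : ℕ → X) (hback : ∀ n : ℕ, f.base (x (n + 1)) = x n)
    (hx : Dense (Set.range x))
    -- `V` is a proper Zariski-closed subset of `X`:
    (V : Set X) (hV : IsClosed V) (hVproper : V ≠ Set.univ) :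
    ∀ I : ℕ → Finset ℕ, (∀ n, ∃ a b : ℕ, I n = Finset.Icc a b) →
      Tendsto (fun n => (I n).card) atTop atTop →
      Tendsto
        (fun n => ((((I n : Set ℕ)) ∩ {m : ℕ | x m ∈ V}).ncard : ℝ) / (I n).card)
        atTop (nhds 0) := by
  intro I hI hIcard
  haveI hcs : CompactSpace X := ⟨by simpa using QuasiCompact.isCompact_preimage (f := p) Set.univ isOpen_univ isCompact_univ⟩
  haveI hlocN : IsLocallyNoetherian X := by
    constructor
    intro U
    have e : U.1 ≤ p ⁻¹ᵁ (⊤ : (Spec (CommRingCat.of k)).Opens) := by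
      intro a _
      trivial
    have ht := LocallyOfFiniteType.finiteType_of_affine_subset (f := p)
      (isAffineOpen_top _) U.2 e
    haveI hNk : IsNoetherianRing Γ(Spec (CommRingCat.of k), ⊤) :=
      isNoetherianRing_of_ringEquiv k
        ((Scheme.ΓSpecIso (CommRingCat.of k)).symm.commRingCatIsoToRingEquiv)
    letI := (p.appLE (⊤ : (Spec (CommRingCat.of k)).Opens) U.1 e).hom.toAlgebra
    haveI hFT : Algebra.FiniteType Γ(Spec (CommRingCat.of k), ⊤) Γ(X, U.1) := ht
    exact Algebra.FiniteType.isNoetherianRing Γ(Spec (CommRingCat.of k), ⊤) Γ(X, U.1)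
  haveI : IsNoetherian X := ⟨⟩
  haveI : NoetherianSpace X := inferInstance
  exact aux_wdml f.base f.continuous f.denseRange x hback hx V hV hVproper I hI hIcard
end
end

section
/- Let n ≥ 1 and let A be an n×n integer matrix with determinant ±1 (i.e. A ∈ GL_n(ℤ)). Let λ > 1 be a real algebraic number such that λ is an eigenvalue of A over ℂ, λ^{-1} is also an eigenvalue of A, and every complex eigenvalue of A distinct from λ and λ^{-1} has modulus exactly 1. Then there exists a field automorphism σ of the field ℚ̄ of algebraic numbers (the algebraic closure of ℚ inside ℂ) fixing ℚ such that σ(λ) = λ^{-1}. -/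
noncomputable section

/-- `ℚ̄`: the algebraic closure of `ℚ` realized as the subfield of `ℂ` consisting of the
complex numbers that are algebraic over `ℚ`. -/
def Qbar : IntermediateField ℚ ℂ := algebraicClosure ℚ ℂ

set_option synthInstance.maxHeartbeats 1000000 in
instance : IsAlgClosure ℚ Qbar := algebraicClosure.isAlgClosure ℚ ℂ

set_option synthInstance.maxHeartbeats 1000000 in
instance : Normal ℚ Qbar := IsAlgClosure.normal ℚ Qbar

/-- let `A ∈ GL_n(ℤ)` (an `n×n` integer matrix of determinant `±1`, `n ≥ 1`) and
`λ > 1` a real algebraic number such that `λ` and `λ⁻¹` are eigenvalues of `A` over `ℂ` and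
every complex eigenvalue of `A` other than `λ, λ⁻¹` has modulus exactly `1`. Then there is a
field automorphism `σ ∈ Gal(ℚ̄/ℚ)` with `σ(λ) = λ⁻¹`. -/
theorem stmt15 (n : ℕ) (hn : 1 ≤ n) (A : Matrix (Fin n) (Fin n) ℤ)
    (hdet : A.det = 1 ∨ A.det = -1)
    (lam : ℝ) (hlam : 1 < lam) (halg : IsAlgebraic ℚ lam)
    (hroot : ((A.map fun a : ℤ => (a : ℂ)).charpoly).IsRoot (lam : ℂ))
    (hroot' : ((A.map fun a : ℤ => (a : ℂ)).charpoly).IsRoot ((lam : ℂ))⁻¹)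
    (hothers : ∀ z : ℂ, ((A.map fun a : ℤ => (a : ℂ)).charpoly).IsRoot z →
      z ≠ (lam : ℂ) → z ≠ ((lam : ℂ))⁻¹ → ‖z‖ = 1) :
    ∃ σ : Qbar ≃ₐ[ℚ] Qbar,
      ∀ x : Qbar, (x : ℂ) = (lam : ℂ) → (σ x : ℂ) = ((lam : ℂ))⁻¹ := by
  classical
  set μ : ℂ := (lam : ℂ) with hμdef
  have hlam0 : (0 : ℝ) < lam := lt_trans one_pos hlam
  have hμ0 : μ ≠ 0 := by
    simp only [hμdef, Complex.ofReal_ne_zero]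
    exact ne_of_gt hlam0
  have hμ'0 : μ⁻¹ ≠ 0 := inv_ne_zero hμ0
  -- charpoly over ℂ is the map of the integer charpoly
  have hcp : (A.map fun a : ℤ => (a : ℂ)).charpoly = A.charpoly.map (Int.castRingHom ℂ) :=
    Matrix.charpoly_map A (Int.castRingHom ℂ)
  set q : Polynomial ℚ := A.charpoly.map (Int.castRingHom ℚ) with hqdef
  have hqc : q.map (algebraMap ℚ ℂ) = A.charpoly.map (Int.castRingHom ℂ) := by
    rw [hqdef, Polynomial.map_map]
    congr 1
  -- integrality over ℤ
  have hintμ : IsIntegral ℤ μ := by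
    refine ⟨A.charpoly, A.charpoly_monic, ?_⟩
    rw [Polynomial.eval₂_eq_eval_map]
    exact hcp ▸ hroot
  have hintμ' : IsIntegral ℤ μ⁻¹ := by
    refine ⟨A.charpoly, A.charpoly_monic, ?_⟩
    rw [Polynomial.eval₂_eq_eval_map]
    exact hcp ▸ hroot'
  have hQμ : IsIntegral ℚ μ := hintμ.tower_top
  have hQμ' : IsIntegral ℚ μ⁻¹ := hintμ'.tower_top
  set P : Polynomial ℚ := minpoly ℚ μ⁻¹ with hPdef
  have hPmonic : P.Monic := minpoly.monic hQμ'
  have hPirr : Irreducible P := minpoly.irreducible hQμ'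
  have hPint : P = (minpoly ℤ μ⁻¹).map (algebraMap ℤ ℚ) :=
    minpoly.isIntegrallyClosed_eq_field_fractions' ℚ hintμ'
  set c : ℤ := (minpoly ℤ μ⁻¹).coeff 0 with hcdef
  have hPc0 : P.coeff 0 = (c : ℚ) := by
    rw [hPint, Polynomial.coeff_map]
    rfl
  have hc0 : c ≠ 0 := by
    have := minpoly.coeff_zero_ne_zero hQμ' hμ'0
    rw [← hPdef, hPc0] at this
    exact_mod_cast this
  set Pc : Polynomial ℂ := P.map (algebraMap ℚ ℂ) with hPcdef
  have hPcmonic : Pc.Monic := hPmonic.map _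
  -- P divides q, so roots of Pc are eigenvalues
  have hPdvd : P ∣ q := by
    refine minpoly.dvd ℚ μ⁻¹ ?_
    rw [Polynomial.aeval_def, Polynomial.eval₂_eq_eval_map, hqc, ← hcp]
    exact hroot'
  have hrootsub : ∀ r ∈ Pc.roots, ((A.map fun a : ℤ => (a : ℂ)).charpoly).IsRoot r := by
    intro r hr
    have h1 : Pc.IsRoot r := Polynomial.isRoot_of_mem_roots hr
    have h2 : Pc ∣ q.map (algebraMap ℚ ℂ) := Polynomial.map_dvd _ hPdvd
    rw [hcp, ← hqc]
    exact h1.dvd h2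
  have hμ'mem : μ⁻¹ ∈ Pc.roots := by
    rw [Polynomial.mem_roots hPcmonic.ne_zero]
    rw [Polynomial.IsRoot, hPcdef, Polynomial.eval_map, ← Polynomial.aeval_def]
    exact minpoly.aeval ℚ μ⁻¹
  have hnodup : Pc.roots.Nodup := Polynomial.nodup_roots (hPirr.separable.map)
  -- |constant term| = |product of roots|
  have hsplit : Pc.Splits :=
     IsAlgClosed.splits Pc
  have hcoeff : Pc.coeff 0 = (-1) ^ Pc.natDegree * Pc.roots.prod :=
    hsplit.coeff_zero_eq_prod_roots_of_monic hPcmonic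
  have habsprod : ‖Pc.roots.prod‖ = ‖(c : ℂ)‖ := by
    have h1 : ‖Pc.coeff 0‖ = ‖Pc.roots.prod‖ := by
      rw [hcoeff, norm_mul, norm_pow, norm_neg, norm_one, one_pow, one_mul]
    have h2 : Pc.coeff 0 = (c : ℂ) := by
      rw [hPcdef, Polynomial.coeff_map, hPc0]
      simp
    rw [← h2, ← h1]
  -- λ is a root of P
  have hμroot : Polynomial.aeval μ P = 0 := by
    by_contra hne
    have hμnotmem : μ ∉ Pc.roots := by
      intro h
      apply hne
      have := Polynomial.isRoot_of_mem_roots h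
      rwa [Polynomial.IsRoot, hPcdef, Polynomial.eval_map, ← Polynomial.aeval_def] at this
    obtain ⟨t, ht⟩ : ∃ t, Pc.roots = μ⁻¹ ::ₘ t := ⟨_, (Multiset.cons_erase hμ'mem).symm⟩
    have hμ'nott : μ⁻¹ ∉ t := by
      rw [ht] at hnodup
      exact (Multiset.nodup_cons.mp hnodup).1
    have hone : ∀ r ∈ t, ‖r‖ = 1 := by
      intro r hr
      have hrmem : r ∈ Pc.roots := by rw [ht]; exact Multiset.mem_cons_of_mem hr
      refine hothers r (hrootsub r hrmem) ?_ ?_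
      · intro h; exact hμnotmem (h ▸ hrmem)
      · intro h; exact hμ'nott (h ▸ hr)
    have hprodt : ‖t.prod‖ = 1 := by
      rw [show ‖t.prod‖ = (normHom : ℂ →*₀ ℝ) t.prod from rfl, map_multiset_prod]
      refine Multiset.prod_eq_one ?_
      intro x hx
      obtain ⟨r, hr, rfl⟩ := Multiset.mem_map.mp hx
      exact hone r hr
    have habs : ‖Pc.roots.prod‖ = lam⁻¹ := by
      rw [ht, Multiset.prod_cons, norm_mul, hprodt, mul_one, norm_inv, hμdef,
        Complex.norm_real, Real.norm_eq_abs, abs_of_pos hlam0]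
    have h1le : (1 : ℝ) ≤ ‖(c : ℂ)‖ := by
      have : (1 : ℤ) ≤ |c| := Int.one_le_abs hc0
      calc (1 : ℝ) ≤ |(c : ℝ)| := by exact_mod_cast this
        _ = ‖(c : ℂ)‖ := by
            rw [Complex.norm_intCast]
    have hle : (1 : ℝ) ≤ lam⁻¹ := by rw [← habs, habsprod]; exact h1le
    have hlt : lam⁻¹ < 1 := inv_lt_one_of_one_lt₀ hlam
    linarith
  have hmineq : P = minpoly ℚ μ :=
    minpoly.eq_of_irreducible_of_monic hPirr hμroot hPmonic
  -- pass to Qbar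
  have hmemμ : μ ∈ Qbar := mem_algebraicClosure_iff'.mpr hQμ
  have hmemμ' : μ⁻¹ ∈ Qbar := mem_algebraicClosure_iff'.mpr hQμ'
  set xl : Qbar := ⟨μ, hmemμ⟩ with hxl
  set xi : Qbar := ⟨μ⁻¹, hmemμ'⟩ with hxi
  have hinj : Function.Injective (algebraMap Qbar ℂ) := (algebraMap Qbar ℂ).injective
  have h1 : minpoly ℚ xl = minpoly ℚ μ := (minpoly.algebraMap_eq hinj xl).symm
  have h2 : minpoly ℚ xi = minpoly ℚ μ⁻¹ := (minpoly.algebraMap_eq hinj xi).symm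
  have heq : minpoly ℚ xi = minpoly ℚ xl := by
    rw [h1, h2, ← hmineq]
  obtain ⟨σ, hσ⟩ := (Normal.minpoly_eq_iff_mem_orbit (F := ℚ) (E := Qbar)).mp heq
  refine ⟨σ, fun x hx => ?_⟩
  have hxeq : x = xl := Subtype.ext hx
  rw [hxeq]
  have : σ xl = xi := hσ
  rw [this]
end
end
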